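/- arXiv:2412.15039 — 5 statements merged into one kernel-verified Lean document; each statement's English description precedes it below -/
import Mathlib

section
/- Let A be a k-uniform hypergraph, α ≥ 0 and U ⊆ V(A). Suppose that among all subsets U ⊆ I' ⊊ V(A) with ρ_{A,I'} ≤ α, the set I has maximal size. Then the template (A, I) is strictly balanced, i.e., ρ_{B,I} < ρ_{A,I} for every subtemplate (B, I) ⊆ (A, I) with V(B) ≠ I and B ≠ A. -/
/-
For `I ⊊ W ⊊ V(A)` the density `ρ_{A,I}` is the mediant of `ρ_{A[W],I}` and
`ρ_{A,W}`. So if `(A, I)` were not strictly balanced, witnessed by `W` with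
`ρ_{A[W],I} ≥ ρ_{A,I}`, then `ρ_{A,W} ≤ ρ_{A,I} ≤ α`, and `W ⊋ I` would contradict the
maximality of `|I|`.
-/

open Finset

/-- The vertex set (support) of a hypergraph given by its edge set. -/
def verts (A : Finset (Finset ℕ)) : Finset ℕ := A.sup id

/-- The edge set of the induced subhypergraph `A[U]`. -/
def ind (A : Finset (Finset ℕ)) (U : Finset ℕ) : Finset (Finset ℕ) := A.filter (· ⊆ U)

/-- The density of the template `(A[U], I)`, where `A[U]` carries the vertex set `U`:
`(e(A[U]) - e(A[I])) / (|U| - |I|)`, and `0` if `U = I`. -/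
def dens (A : Finset (Finset ℕ)) (U I : Finset ℕ) : ℚ :=
  if U = I then 0
  else (((ind A U).card : ℚ) - ((ind A I).card : ℚ)) / ((U.card : ℚ) - (I.card : ℚ))

/-- The density `ρ_{A,I}` of the template `(A, I)` (whose vertex set is `verts A ∪ I`). -/
def tdens (A : Finset (Finset ℕ)) (I : Finset ℕ) : ℚ := dens A (verts A ∪ I) I

/-- The `k`-density `ρ_A = (e(A) - 1)/(v(A) - k)` of a `k`-uniform hypergraph. -/
def kdens (k : ℕ) (A : Finset (Finset ℕ)) : ℚ :=
  ((A.card : ℚ) - 1) / (((verts A).card : ℚ) - (k : ℚ))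

/-- The template `(A, I)` is strictly balanced: every proper subtemplate `(B, I) ⊆ (A, I)`
(`B = A[U]` with vertex set `U`, `I ⊆ U`, `V(B) = U ≠ I`, `B ≠ A`) has strictly smaller
density. -/
def StrictBalT (A : Finset (Finset ℕ)) (I : Finset ℕ) : Prop :=
  ∀ U : Finset ℕ, I ⊆ U → U ⊂ verts A ∪ I → U ≠ I → dens A U I < tdens A I

theorem sub_div_sub_le_div_of_div_le_div {K : Type*} [Field K] [LinearOrder K]
    [IsStrictOrderedRing K] {a c p q : K} (hc : 0 < c) (hcq : c < q)
    (h : p / q ≤ a / c) : (p - a) / (q - c) ≤ p / q := by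
  have hq : 0 < q := hc.trans hcq
  rw [div_le_div_iff₀ hq hc] at h
  rw [div_le_div_iff₀ (sub_pos.mpr hcq) hq]
  nlinarith

theorem dens_of_ne {A : Finset (Finset ℕ)} {U I : Finset ℕ} (h : U ≠ I) :
    dens A U I = (((ind A U).card : ℚ) - (ind A I).card) / ((U.card : ℚ) - I.card) :=
  if_neg h

theorem tdens_of_subset {A : Finset (Finset ℕ)} {I : Finset ℕ} (h : I ⊆ verts A) :
    tdens A I = dens A (verts A) I := by
  rw [tdens, union_eq_left.mpr h]

theorem dens_le_dens_of_dens_le {A : Finset (Finset ℕ)} {I W V : Finset ℕ}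
    (hIW : I ⊂ W) (hWV : W ⊂ V) (h : dens A V I ≤ dens A W I) :
    dens A V W ≤ dens A V I := by
  have hc : (0 : ℚ) < W.card - I.card := sub_pos.mpr (by exact_mod_cast card_lt_card hIW)
  have hcq : (W.card : ℚ) - I.card < V.card - I.card := by gcongr
  rw [dens_of_ne (hIW.trans hWV).ne', dens_of_ne hIW.ne'] at h
  rw [dens_of_ne hWV.ne', dens_of_ne (hIW.trans hWV).ne']
  simpa only [sub_sub_sub_cancel_right] using sub_div_sub_le_div_of_div_le_div hc hcq h

theorem extension_is_strictly_balanced_general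
    (A : Finset (Finset ℕ))
    (α : ℚ)
    (U I : Finset ℕ) (hUI : U ⊆ I) (hIV : I ⊂ verts A)
    (hIα : tdens A I ≤ α)
    (hImax : ∀ I' : Finset ℕ, U ⊆ I' → I' ⊂ verts A → tdens A I' ≤ α → I'.card ≤ I.card) :
    StrictBalT A I := by
  intro W hIW hWV hWI
  by_contra! hbig
  rw [union_eq_left.mpr hIV.subset] at hWV
  have hIW' : I ⊂ W := ssubset_of_subset_of_ne hIW hWI.symm
  rw [tdens_of_subset hIV.subset] at hbig hIα
  have hWα : tdens A W ≤ α := by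
    rw [tdens_of_subset hWV.subset]
    exact (dens_le_dens_of_dens_le hIW' hWV hbig).trans hIα
  exact (card_lt_card hIW').not_ge (hImax W (hUI.trans hIW) hWV hWα)

/-- if, among all sets `I'` with `U ⊆ I' ⊊ V(A)` and `ρ_{A,I'} ≤ α`, the set `I`
has maximal size, then the template `(A, I)` is strictly balanced. -/
theorem extension_is_strictly_balanced
    (k : ℕ) (hk : 2 ≤ k)
    (A : Finset (Finset ℕ)) (hA : ∀ e ∈ A, e.card = k)
    (α : ℚ) (hα : 0 ≤ α)
    (U I : Finset ℕ) (hUI : U ⊆ I) (hIV : I ⊂ verts A)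
    (hIα : tdens A I ≤ α)
    (hImax : ∀ I' : Finset ℕ, U ⊆ I' → I' ⊂ verts A → tdens A I' ≤ α → I'.card ≤ I.card) :
    StrictBalT A I :=
  extension_is_strictly_balanced_general A α U I hUI hIV hIα hImax
end

section
/- Let ℓ ≥ 1 and let A₁, …, A_ℓ be k-balanced k-uniform hypergraphs each with k-density at least ρ. Set S_i := A₁ + … + A_i (union of hypergraphs) and suppose that for all 2 ≤ i ≤ ℓ, the edge sets satisfy S_{i−1} ∩ A_i ≠ ∅. Let S := S_ℓ and J ⊊ V(S) with S[J] ≠ ∅ (the induced subgraph on J has an edge). Then ρ_{S,J} ≥ ρ. -/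
open Finset

/-- `A` is `k`-balanced: it has an edge, and every subgraph on at least `k+1` vertices has
`k`-density at most that of `A`. -/
def KBalanced (k : ℕ) (A : Finset (Finset ℕ)) : Prop :=
  A.Nonempty ∧ ∀ G ⊆ A, k + 1 ≤ (verts G).card → kdens k G ≤ kdens k A

lemma edge_subset_verts {A : Finset (Finset ℕ)} {e : Finset ℕ} (he : e ∈ A) : e ⊆ verts A :=
  Finset.le_sup (f := id) he

lemma verts_le {A : Finset (Finset ℕ)} {U : Finset ℕ} (h : ∀ e ∈ A, e ⊆ U) : verts A ⊆ U :=
  Finset.sup_le h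

lemma ind_self (A : Finset (Finset ℕ)) : ind A (verts A) = A :=
  filter_true_of_mem (fun _ he => edge_subset_verts he)

lemma mem_ind {A : Finset (Finset ℕ)} {U e : Finset ℕ} : e ∈ ind A U ↔ e ∈ A ∧ e ⊆ U := by
  simp [ind]

lemma verts_union (A B : Finset (Finset ℕ)) : verts (A ∪ B) = verts A ∪ verts B :=
  Finset.sup_union

lemma keyIneq (k : ℕ) (ρ : ℚ) (A : Finset (Finset ℕ))
    (hunif : ∀ e ∈ A, e.card = k) (hbal : KBalanced k A) (hρ : ρ ≤ kdens k A)
    (U : Finset ℕ) (hU : U ⊆ verts A) (hne : (ind A U).Nonempty) :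
    ρ * (((verts A).card : ℚ) - (U.card : ℚ)) ≤ (A.card : ℚ) - ((ind A U).card : ℚ) := by
  obtain ⟨e0, he0⟩ := hne
  rw [mem_ind] at he0
  obtain ⟨he0A, he0U⟩ := he0
  have hkv : k ≤ (verts A).card := by
    rw [← hunif e0 he0A]; exact card_le_card (edge_subset_verts he0A)
  rcases eq_or_lt_of_le hkv with hkv' | hkv'
  · -- v = k : then U = verts A and ind A U = A
    have he0v : e0 = verts A := by
      apply eq_of_subset_of_card_le (edge_subset_verts he0A)
      rw [hunif e0 he0A, hkv']
    have hUv : U = verts A := by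
      apply Subset.antisymm hU
      rw [← he0v] at *; exact he0U
    rw [hUv, ind_self]
    simp
  · -- k < v
    set ρA := kdens k A with hρA
    have hvk : (0:ℚ) < ((verts A).card : ℚ) - (k : ℚ) := by
      have h : (k:ℚ) < ((verts A).card : ℚ) := by exact_mod_cast hkv'
      linarith
    have hA1 : 1 ≤ A.card := card_pos.mpr ⟨e0, he0A⟩
    have hAcard : (A.card : ℚ) - 1 = ρA * (((verts A).card : ℚ) - (k:ℚ)) := by
      rw [hρA]; unfold kdens; field_simp
    have hρA0 : 0 ≤ ρA := by
      rw [hρA]; unfold kdens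
      apply div_nonneg _ (le_of_lt hvk)
      have : (1:ℚ) ≤ (A.card : ℚ) := by exact_mod_cast hA1
      linarith
    have hUA : (U.card : ℚ) ≤ ((verts A).card : ℚ) := by exact_mod_cast card_le_card hU
    have hkU : (k:ℚ) ≤ (U.card : ℚ) := by
      have : k ≤ U.card := by rw [← hunif e0 he0A]; exact card_le_card he0U
      exact_mod_cast this
    -- bound on ind A U
    set G := ind A U with hG
    have hGA : G ⊆ A := filter_subset _ _
    have hvGU : verts G ⊆ U := verts_le (fun e he => (mem_ind.mp he).2)
    have he0G : e0 ∈ G := mem_ind.mpr ⟨he0A, he0U⟩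
    have hclaim : (G.card : ℚ) ≤ 1 + ρA * ((U.card : ℚ) - (k:ℚ)) := by
      by_cases hbig : k + 1 ≤ (verts G).card
      · have hb := hbal.2 G hGA hbig
        have hvGk : (0:ℚ) < ((verts G).card : ℚ) - (k:ℚ) := by
          have : (k:ℚ) + 1 ≤ ((verts G).card : ℚ) := by exact_mod_cast hbig
          linarith
        have : (G.card : ℚ) - 1 ≤ ρA * (((verts G).card : ℚ) - (k:ℚ)) := by
          rw [← hρA] at hb
          unfold kdens at hb
          rw [div_le_iff₀ hvGk] at hb
          linarith [hb]
        have h2 : ρA * (((verts G).card : ℚ) - (k:ℚ)) ≤ ρA * ((U.card : ℚ) - (k:ℚ)) := by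
          apply mul_le_mul_of_nonneg_left _ hρA0
          have : (verts G).card ≤ U.card := card_le_card hvGU
          have : ((verts G).card : ℚ) ≤ (U.card : ℚ) := by exact_mod_cast this
          linarith
        linarith
      · push_neg at hbig
        have hsingle : G ⊆ {verts G} := by
          intro e he
          rw [mem_singleton]
          apply eq_of_subset_of_card_le (edge_subset_verts he)
          rw [hunif e (hGA he)]; omega
        have : G.card ≤ 1 := by
          calc G.card ≤ ({verts G} : Finset (Finset ℕ)).card := card_le_card hsingle
          _ = 1 := card_singleton _
        have h1 : (G.card : ℚ) ≤ 1 := by exact_mod_cast this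
        nlinarith
    have hmul : ρ * (((verts A).card : ℚ) - (U.card : ℚ)) ≤ ρA * (((verts A).card : ℚ) - (U.card : ℚ)) := by
      apply mul_le_mul_of_nonneg_right hρ (by linarith)
    nlinarith [hmul, hclaim, hAcard]

lemma glue (ρ : ℚ) (P Q : Finset (Finset ℕ)) (X : Finset ℕ)
    (hX : X ⊆ verts P ∪ verts Q)
    (h1 : ρ * (((verts P).card : ℚ) - ((verts P ∩ X).card : ℚ))
      ≤ (P.card : ℚ) - ((ind P (verts P ∩ X)).card : ℚ))
    (h2 : ρ * (((verts Q).card : ℚ) - ((verts Q ∩ (verts P ∪ X)).card : ℚ))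
      ≤ (Q.card : ℚ) - ((ind Q (verts Q ∩ (verts P ∪ X))).card : ℚ)) :
    ρ * (((verts (P ∪ Q)).card : ℚ) - (X.card : ℚ))
      ≤ ((P ∪ Q).card : ℚ) - ((ind (P ∪ Q) X).card : ℚ) := by
  classical
  set V1 := verts P
  set V2 := verts Q
  set X1 := V1 ∩ X
  set U := V2 ∩ (V1 ∪ X)
  set n1 := (P.filter (fun e => ¬ e ⊆ X)).card with hn1
  set n2 := ((Q \ P).filter (fun e => ¬ e ⊆ X)).card with hn2
  -- edge identities
  have e1 : P.card = (ind P X1).card + n1 := by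
    have : ind P X1 = P.filter (fun e => e ⊆ X) := by
      ext e
      simp only [mem_ind, mem_filter, X1]
      constructor
      · rintro ⟨heP, heX⟩; exact ⟨heP, heX.trans inter_subset_right⟩
      · rintro ⟨heP, heX⟩; exact ⟨heP, subset_inter (edge_subset_verts heP) heX⟩
    rw [this]
    exact (card_filter_add_card_filter_not (fun e => e ⊆ X)).symm
  have e2 : Q.card ≤ (ind Q U).card + n2 := by
    have hsub : Q \ ind Q U ⊆ (Q \ P).filter (fun e => ¬ e ⊆ X) := by
      intro e he
      rw [mem_sdiff] at he
      obtain ⟨heQ, heU⟩ := he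
      rw [mem_filter, mem_sdiff]
      have heV2 : e ⊆ V2 := edge_subset_verts heQ
      have heP : e ∉ P := by
        intro hP
        exact heU (mem_ind.mpr ⟨heQ, subset_inter heV2 ((edge_subset_verts hP).trans subset_union_left)⟩)
      have heX : ¬ e ⊆ X := by
        intro hX'
        exact heU (mem_ind.mpr ⟨heQ, subset_inter heV2 (hX'.trans subset_union_right)⟩)
      exact ⟨⟨heQ, heP⟩, heX⟩
    have h := card_le_card hsub
    have hc : (Q \ ind Q U).card = Q.card - (ind Q U).card :=
      card_sdiff_of_subset (filter_subset _ _)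
    have hle : (ind Q U).card ≤ Q.card := card_le_card (filter_subset _ _)
    omega
  have e3 : (P ∪ Q).card = (ind (P ∪ Q) X).card + n1 + n2 := by
    have hPQ : P ∪ Q = P ∪ (Q \ P) := (union_sdiff_self_eq_union).symm
    have hd : Disjoint (P.filter (fun e => ¬ e ⊆ X)) ((Q \ P).filter (fun e => ¬ e ⊆ X)) :=
      disjoint_filter_filter (disjoint_sdiff)
    have : ((P ∪ Q).filter (fun e => ¬ e ⊆ X)).card = n1 + n2 := by
      rw [hPQ, filter_union, card_union_of_disjoint hd]
    have h := card_filter_add_card_filter_not (s := P ∪ Q) (fun e => e ⊆ X)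
    have hind : ind (P ∪ Q) X = (P ∪ Q).filter (fun e => e ⊆ X) := rfl
    rw [hind]
    omega
  -- vertex identity
  have v1 : (V1 ∩ X).card + (V1 \ X).card = V1.card := card_inter_add_card_sdiff _ _
  have v2 : (V2 ∩ (V1 ∪ X)).card + (V2 \ (V1 ∪ X)).card = V2.card := card_inter_add_card_sdiff _ _
  have v3 : X.card + ((V1 ∪ V2) \ X).card = (V1 ∪ V2).card := by
    have := card_inter_add_card_sdiff (V1 ∪ V2) X
    rwa [inter_eq_right.mpr hX] at this
  have v4 : (V1 ∪ V2) \ X = (V1 \ X) ∪ (V2 \ (V1 ∪ X)) := by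
    ext x
    simp only [mem_sdiff, mem_union]
    tauto
  have v5 : Disjoint (V1 \ X) (V2 \ (V1 ∪ X)) := by
    rw [disjoint_left]
    intro a ha hb
    rw [mem_sdiff] at ha hb
    exact hb.2 (mem_union_left _ ha.1)
  have v6 : ((V1 ∪ V2) \ X).card = (V1 \ X).card + (V2 \ (V1 ∪ X)).card := by
    rw [v4, card_union_of_disjoint v5]
  have vid : (V1 ∪ V2).card + X1.card + U.card = V1.card + V2.card + X.card := by
    simp only [X1, U] at *
    omega
  -- combine over ℚ
  have hq : ((V1 ∪ V2).card : ℚ) - (X.card : ℚ)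
      = (((V1.card : ℚ) - (X1.card : ℚ)) + ((V2.card : ℚ) - (U.card : ℚ))) := by
    have : (((V1 ∪ V2).card + X1.card + U.card : ℕ) : ℚ) = ((V1.card + V2.card + X.card : ℕ) : ℚ) := by
      exact_mod_cast congrArg (fun n : ℕ => (n : ℚ)) vid
    push_cast at this
    linarith
  have he1 : (P.card : ℚ) - ((ind P X1).card : ℚ) = (n1 : ℚ) := by
    have : ((P.card : ℕ) : ℚ) = (((ind P X1).card + n1 : ℕ) : ℚ) := by exact_mod_cast congrArg (fun n : ℕ => (n:ℚ)) e1
    push_cast at this; linarith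
  have he2 : (Q.card : ℚ) - ((ind Q U).card : ℚ) ≤ (n2 : ℚ) := by
    have : ((Q.card : ℕ) : ℚ) ≤ (((ind Q U).card + n2 : ℕ) : ℚ) := by exact_mod_cast e2
    push_cast at this; linarith
  have he3 : ((P ∪ Q).card : ℚ) - ((ind (P ∪ Q) X).card : ℚ) = (n1 : ℚ) + (n2 : ℚ) := by
    have : (((P ∪ Q).card : ℕ) : ℚ) = (((ind (P ∪ Q) X).card + n1 + n2 : ℕ) : ℚ) := by exact_mod_cast congrArg (fun n : ℕ => (n:ℚ)) e3
    push_cast at this; linarith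
  rw [verts_union]
  calc ρ * (((V1 ∪ V2).card : ℚ) - (X.card : ℚ))
      = ρ * (((V1.card : ℚ) - (X1.card : ℚ))) + ρ * (((V2.card : ℚ) - (U.card : ℚ))) := by
        rw [hq]; ring
    _ ≤ ((P.card : ℚ) - ((ind P X1).card : ℚ)) + ((Q.card : ℚ) - ((ind Q U).card : ℚ)) :=
        add_le_add h1 h2
    _ ≤ (n1 : ℚ) + (n2 : ℚ) := by rw [he1]; linarith
    _ = ((P ∪ Q).card : ℚ) - ((ind (P ∪ Q) X).card : ℚ) := he3.symm

lemma main_ind (k : ℕ) (ρ : ℚ) (A : ℕ → Finset (Finset ℕ)) (ℓ : ℕ)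
    (hunif : ∀ i < ℓ, ∀ e ∈ A i, e.card = k)
    (hbal : ∀ i < ℓ, KBalanced k (A i))
    (hdens : ∀ i < ℓ, ρ ≤ kdens k (A i))
    (hshare : ∀ i, 1 ≤ i → i < ℓ → ((((Finset.range i).biUnion A)) ∩ A i).Nonempty) :
    ∀ n, 1 ≤ n → n ≤ ℓ → ∀ X, X ⊆ verts ((Finset.range n).biUnion A) →
      (ind ((Finset.range n).biUnion A) X).Nonempty →
      ρ * (((verts ((Finset.range n).biUnion A)).card : ℚ) - (X.card : ℚ))
        ≤ (((Finset.range n).biUnion A).card : ℚ)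
          - ((ind ((Finset.range n).biUnion A) X).card : ℚ) := by
  intro n
  induction n with
  | zero => intro h; omega
  | succ n ih =>
    intro _ hnℓ X hX hne
    have hnℓ' : n < ℓ := hnℓ
    by_cases hn0 : n = 0
    · subst hn0
      have h01 : (Finset.range 1).biUnion A = A 0 := by
        rw [Finset.range_one, Finset.singleton_biUnion]
      rw [h01] at hX hne ⊢
      exact keyIneq k ρ (A 0) (hunif 0 hnℓ') (hbal 0 hnℓ') (hdens 0 hnℓ') X hX hne
    · have hn1 : 1 ≤ n := Nat.one_le_iff_ne_zero.mpr hn0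
      set S' := (Finset.range n).biUnion A with hS'
      set B := A n with hB
      have hsucc : (Finset.range (n + 1)).biUnion A = S' ∪ B := by
        rw [Finset.range_add_one, Finset.biUnion_insert, union_comm]
      obtain ⟨estar, hestar⟩ := hshare n hn1 hnℓ'
      rw [mem_inter] at hestar
      obtain ⟨heS', heB⟩ := hestar
      rw [hsucc] at hX hne ⊢
      rw [verts_union] at hX ⊢
      obtain ⟨f, hf⟩ := hne
      rw [mem_ind, mem_union] at hf
      obtain ⟨hfmem, hfX⟩ := hf
      have ihn := ih hn1 (le_of_lt hnℓ')
      by_cases hcase : (ind S' (verts S' ∩ X)).Nonempty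
      · -- an edge of S' lies inside X
        have h1 := ihn (verts S' ∩ X) inter_subset_left hcase
        have h2 : ρ * (((verts B).card : ℚ) - ((verts B ∩ (verts S' ∪ X)).card : ℚ))
            ≤ (B.card : ℚ) - ((ind B (verts B ∩ (verts S' ∪ X))).card : ℚ) := by
          apply keyIneq k ρ B (hunif n hnℓ') (hbal n hnℓ') (hdens n hnℓ')
            _ inter_subset_left
          exact ⟨estar, mem_ind.mpr ⟨heB, subset_inter (edge_subset_verts heB)
            ((edge_subset_verts heS').trans subset_union_left)⟩⟩
        have := glue ρ S' B X hX h1 h2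
        rwa [verts_union] at this
      · -- no edge of S' inside X; the witness edge f is in B
        have hfB : f ∈ B := by
          rcases hfmem with hfS' | hfB
          · exact absurd ⟨f, mem_ind.mpr ⟨hfS', subset_inter (edge_subset_verts hfS') hfX⟩⟩ hcase
          · exact hfB
        have h1 : ρ * (((verts B).card : ℚ) - ((verts B ∩ X).card : ℚ))
            ≤ (B.card : ℚ) - ((ind B (verts B ∩ X)).card : ℚ) := by
          apply keyIneq k ρ B (hunif n hnℓ') (hbal n hnℓ') (hdens n hnℓ')
            _ inter_subset_left
          exact ⟨f, mem_ind.mpr ⟨hfB, subset_inter (edge_subset_verts hfB) hfX⟩⟩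
        have h2 := ihn (verts S' ∩ (verts B ∪ X)) inter_subset_left
          ⟨estar, mem_ind.mpr ⟨heS', subset_inter (edge_subset_verts heS')
            ((edge_subset_verts heB).trans subset_union_left)⟩⟩
        have hX' : X ⊆ verts B ∪ verts S' := by rw [union_comm]; exact hX
        have := glue ρ B S' X hX' h1 h2
        rw [verts_union, union_comm (verts B) (verts S'), union_comm B S'] at this
        exact this

/-- if `A₁, …, A_ℓ` are `k`-balanced `k`-graphs of `k`-density at least `ρ`, each
sharing an edge with the union of its predecessors, `S` is their union and `J ⊊ V(S)` with
`S[J] ≠ ∅`, then `ρ_{S,J} ≥ ρ`. -/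
theorem balanced_gluing_rest_density
    (k : ℕ) (hk : 2 ≤ k) (ℓ : ℕ) (hℓ : 1 ≤ ℓ) (ρ : ℚ)
    (A : ℕ → Finset (Finset ℕ))
    (hunif : ∀ i < ℓ, ∀ e ∈ A i, e.card = k)
    (hbal : ∀ i < ℓ, KBalanced k (A i))
    (hdens : ∀ i < ℓ, ρ ≤ kdens k (A i))
    (hshare : ∀ i, 1 ≤ i → i < ℓ → ((((Finset.range i).biUnion A)) ∩ A i).Nonempty)
    (S : Finset (Finset ℕ)) (hS : S = (Finset.range ℓ).biUnion A)
    (J : Finset ℕ) (hJV : J ⊂ verts S) (hJe : (ind S J).Nonempty) :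
    ρ ≤ tdens S J := by
  have hJsub : J ⊆ verts S := hJV.subset
  have hne : verts S ∪ J ≠ J := by
    rw [union_eq_left.mpr hJsub]
    exact (hJV.ne).symm
  have hpos : (0:ℚ) < ((verts S).card : ℚ) - (J.card : ℚ) := by
    have h0 : J.card < (verts S).card := card_lt_card hJV
    have h' : (J.card : ℚ) < ((verts S).card : ℚ) := by exact_mod_cast h0
    linarith
  unfold tdens _root_.dens
  rw [if_neg hne, union_eq_left.mpr hJsub, ind_self]
  rw [le_div_iff₀ hpos]
  subst hS
  exact main_ind k ρ A ℓ hunif hbal hdens hshare ℓ hℓ le_rfl J hJsub hJe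
end

section
/- Suppose A₁, …, A_ℓ is a sequence of distinct strictly k-balanced k-uniform hypergraphs with common k-density ρ that forms a self-avoiding cyclic walk. Let S := A₁ + … + A_ℓ. Then there exists an edge e ∈ S with ρ_{S,e} > ρ. -/
open Finset

/-- `A 0, …, A (n-1)` is a self-avoiding cyclic walk: the hypergraphs are distinct and there
are distinct edges `e 0, …, e (n-1)` with `e i ∈ A i ∩ A ((i+1) % n)` for all `i < n`. -/
def IsSACW (n : ℕ) (A : ℕ → Finset (Finset ℕ)) : Prop :=
  2 ≤ n ∧ (∀ i < n, ∀ j < n, A i = A j → i = j) ∧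
    ∃ e : ℕ → Finset ℕ,
      (∀ i < n, ∀ j < n, e i = e j → i = j) ∧
      ∀ i < n, e i ∈ A i ∧ e i ∈ A ((i + 1) % n)

/-- `A` is strictly `k`-balanced: it has at least three edges and every proper subgraph with
at least two edges has strictly smaller `k`-density. -/
def StrictlyKBalanced (k : ℕ) (A : Finset (Finset ℕ)) : Prop :=
  3 ≤ A.card ∧ ∀ G ⊂ A, 2 ≤ G.card → kdens k G < kdens k A

/-!
Write `excess k ρ T = (e(T) - 1) - ρ (v(T) - k)`. Adding a strictly balanced block `B` of density
`ρ` to a hypergraph `T` with which it shares an edge never lowers the excess (strict balance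
applied to `B ∩ T`), and keeps it only if `B ⊆ T` or `B` is glued to `T` along a single edge `d`
with `V(B) ∩ V(T) = d`. If `S` had excess `≤ 0`, adding `A 1, A 2, …` to `A 0` (excess `0`) one
at a time would keep the excess at `0` throughout. The closing edge prevents `A (n - 1)` from
being glued, so some `A m` is covered by its predecessors; take the first, and `q` least with
`A m ⊆ A 0 ∪ … ∪ A q`. Then `A m` splits into `X = A m ∩ (A 0 ∪ … ∪ A (q - 1))` and the rest
`Y ⊆ A q`, which share vertices only inside the gluing edge of `A q`. Strict balance of `A m` and `A q` forces
`X` to be a single edge `h` and the shared vertex set `F` to be too small to lie in two edges of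
one block. But all gluing edges between the block of `h` and `A q` contain `F`, and two of them,
or `h` and one of them, lie in a common block.
-/

lemma verts_mono {A B : Finset (Finset ℕ)} (h : A ⊆ B) : verts A ⊆ verts B :=
  Finset.sup_mono h

lemma subset_verts {A : Finset (Finset ℕ)} {x : Finset ℕ} (h : x ∈ A) : x ⊆ verts A :=
  Finset.le_sup (f := id) h

lemma verts_singleton (x : Finset ℕ) : verts {x} = x :=
  Finset.sup_singleton

lemma verts_insert (x : Finset ℕ) (A : Finset (Finset ℕ)) :
    verts (insert x A) = x ∪ verts A :=
  Finset.sup_insert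

lemma verts_inter_subset (A B : Finset (Finset ℕ)) : verts (A ∩ B) ⊆ verts A ∩ verts B :=
  subset_inter (verts_mono inter_subset_left) (verts_mono inter_subset_right)

lemma lt_card_verts {k : ℕ} {G : Finset (Finset ℕ)} (hG : ∀ x ∈ G, x.card = k)
    (h2 : 2 ≤ G.card) : k < (verts G).card := by
  obtain ⟨x, hx, y, hy, hxy⟩ := one_lt_card.mp h2
  have hyx : ¬ y ⊆ x := fun h => hxy (eq_of_subset_of_card_le h (by rw [hG x hx, hG y hy])).symm
  calc k = x.card := (hG x hx).symm
    _ < (x ∪ y).card := card_lt_card (Finset.ssubset_iff_subset_ne.mpr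
        ⟨subset_union_left, fun h => hyx (h ▸ subset_union_right)⟩)
    _ ≤ (verts G).card := card_le_card (union_subset (subset_verts hx) (subset_verts hy))

/-- A strictly `k`-balanced `k`-uniform hypergraph of `k`-density `ρ`, with the density
equation cleared of its denominator. -/
structure StrictlyBalancedAt (k : ℕ) (ρ : ℚ) (B : Finset (Finset ℕ)) : Prop where
  card_eq : ∀ x ∈ B, x.card = k
  three_le_card : 3 ≤ B.card
  kdens_lt : ∀ G ⊂ B, 2 ≤ G.card → kdens k G < ρ
  card_sub_one_eq : (B.card : ℚ) - 1 = ρ * ((verts B).card - k)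

namespace StrictlyBalancedAt

variable {k : ℕ} {ρ : ℚ} {B C G X Y : Finset (Finset ℕ)}

lemma of_strictlyKBalanced (hu : ∀ x ∈ B, x.card = k) (hB : StrictlyKBalanced k B)
    (hρ : kdens k B = ρ) : StrictlyBalancedAt k ρ B where
  card_eq := hu
  three_le_card := hB.1
  kdens_lt G hG h2 := hρ ▸ hB.2 G hG h2
  card_sub_one_eq := by
    have hv : (k : ℚ) < (verts B).card := by exact_mod_cast lt_card_verts hu (by linarith [hB.1])
    rw [← hρ, kdens, div_mul_cancel₀ _ (sub_ne_zero.mpr hv.ne')]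

lemma lt_card_verts (hB : StrictlyBalancedAt k ρ B) : k < (verts B).card :=
  _root_.lt_card_verts hB.card_eq (by linarith [hB.three_le_card])

lemma pos (hB : StrictlyBalancedAt k ρ B) : 0 < ρ := by
  have h3 : (3 : ℚ) ≤ B.card := by exact_mod_cast hB.three_le_card
  have hv : (k : ℚ) < (verts B).card := by exact_mod_cast hB.lt_card_verts
  nlinarith [hB.card_sub_one_eq]

lemma card_sub_one_lt (hB : StrictlyBalancedAt k ρ B) (hG : G ⊂ B) (h2 : 2 ≤ G.card) :
    (G.card : ℚ) - 1 < ρ * ((verts G).card - k) := by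
  have hv : (k : ℚ) < (verts G).card := by
    exact_mod_cast _root_.lt_card_verts (fun x hx => hB.card_eq x (hG.subset hx)) h2
  have := hB.kdens_lt G hG h2
  rwa [kdens, div_lt_iff₀ (sub_pos.mpr hv)] at this

lemma card_sub_one_le (hB : StrictlyBalancedAt k ρ B) (hG : G ⊆ B) (hne : G.Nonempty) :
    (G.card : ℚ) - 1 ≤ ρ * ((verts G).card - k) := by
  rcases (one_le_card.mpr hne).eq_or_lt with h1 | h2
  · obtain ⟨x, rfl⟩ := card_eq_one.mp h1.symm
    simp [verts_singleton, hB.card_eq x (hG (mem_singleton_self x))]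
  · rcases hG.eq_or_ssubset with rfl | hG
    · exact hB.card_sub_one_eq.le
    · exact (hB.card_sub_one_lt hG h2).le

lemma not_ssubset (hB : StrictlyBalancedAt k ρ B) (hC : StrictlyBalancedAt k ρ C) : ¬ B ⊂ C :=
  fun h => (hC.card_sub_one_lt h (by linarith [hB.three_le_card])).ne hB.card_sub_one_eq

lemma one_lt_mul_sub_card {x y F : Finset ℕ} (hB : StrictlyBalancedAt k ρ B) (hx : x ∈ B)
    (hy : y ∈ B) (hxy : x ≠ y) (hF : F ⊆ x ∩ y) : 1 < ρ * (k - F.card) := by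
  have hpair : ({x, y} : Finset (Finset ℕ)) ⊂ B :=
    Finset.ssubset_iff_subset_ne.mpr ⟨insert_subset hx (singleton_subset_iff.mpr hy), fun h => by
      have := hB.three_le_card; rw [← h, card_pair hxy] at this; omega⟩
  have hlt := hB.card_sub_one_lt hpair (card_pair hxy).ge
  rw [card_pair hxy, verts_insert, verts_singleton] at hlt
  have hunion : ((x ∪ y).card : ℚ) + (x ∩ y).card = k + k := by
    have := card_union_add_card_inter x y
    rw [hB.card_eq x hx, hB.card_eq y hy] at this
    exact_mod_cast this
  have hFle : ρ * F.card ≤ ρ * (x ∩ y).card :=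
    mul_le_mul_of_nonneg_left (by exact_mod_cast card_le_card hF) hB.pos.le
  push_cast at hlt
  linear_combination hlt + hFle + ρ * hunion

lemma card_le_of_insert {f : Finset ℕ} (hC : StrictlyBalancedAt k ρ C) (hY : Y ⊆ C)
    (hf : f ∈ C) (hfY : f ∉ Y) : (Y.card : ℚ) ≤ ρ * ((verts Y).card - (f ∩ verts Y).card) := by
  have hle := hC.card_sub_one_le (insert_subset hf hY) (insert_nonempty f Y)
  rw [card_insert_of_notMem hfY, verts_insert] at hle
  have hunion : ((f ∪ verts Y).card : ℚ) + (f ∩ verts Y).card = k + (verts Y).card := by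
    have := card_union_add_card_inter f (verts Y)
    rw [hC.card_eq f hf] at this
    exact_mod_cast this
  push_cast at hle
  linear_combination hle + ρ * hunion

lemma card_eq_one_and_mul_lt_one_of_disjoint_union (hB : StrictlyBalancedAt k ρ B)
    (hXY : Disjoint X Y) (hunion : X ∪ Y = B) (hX : X.Nonempty) (hY : Y.Nonempty)
    (hdense : (Y.card : ℚ) ≤ ρ * ((verts Y).card - (verts X ∩ verts Y).card)) :
    X.card = 1 ∧ ρ * (k - (verts X ∩ verts Y).card) < 1 := by
  have hproper {U V : Finset (Finset ℕ)} (hUV : Disjoint U V) (hUVB : U ∪ V = B)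
      (hV : V.Nonempty) : U ⊂ B := by
    obtain ⟨v, hv⟩ := hV
    exact Finset.ssubset_iff_subset_ne.mpr ⟨hUVB ▸ subset_union_left,
      fun h => disjoint_right.mp hUV hv (h ▸ hUVB ▸ mem_union_right U hv)⟩
  have hcard : (B.card : ℚ) = X.card + Y.card := by
    rw [← hunion]; exact_mod_cast card_union_of_disjoint hXY
  have hverts : ρ * ((verts B).card + (verts X ∩ verts Y).card) =
      ρ * ((verts X).card + (verts Y).card) := by
    have h : ((verts X ∪ verts Y).card : ℚ) + (verts X ∩ verts Y).card =
        (verts X).card + (verts Y).card := by exact_mod_cast card_union_add_card_inter _ _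
    rw [← hunion, verts_union, h]
  have hBeq := hB.card_sub_one_eq
  have hX1 : X.card = 1 := by
    by_contra hne
    have hXlt := hB.card_sub_one_lt (hproper hXY hunion hY) (by have := one_le_card.mpr hX; omega)
    linarith
  obtain ⟨x, rfl⟩ := card_eq_one.mp hX1
  have hx : ρ * (verts {x}).card = ρ * k := by
    rw [verts_singleton, hB.card_eq x (hunion ▸ mem_union_left Y (mem_singleton_self x))]
  have hY2 : 2 ≤ Y.card := by
    have := hB.three_le_card; rw [← hunion, card_union_of_disjoint hXY, hX1] at this; omega
  have hYlt := hB.card_sub_one_lt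
    (hproper hXY.symm (union_comm Y _ ▸ hunion) ⟨x, mem_singleton_self x⟩) hY2
  refine ⟨rfl, ?_⟩
  rw [hX1, Nat.cast_one] at hcard
  linarith

end StrictlyBalancedAt

def excess (k : ℕ) (ρ : ℚ) (T : Finset (Finset ℕ)) : ℚ :=
  (T.card - 1) - ρ * ((verts T).card - k)

lemma lt_kdens_of_excess_pos {k : ℕ} {ρ : ℚ} {T : Finset (Finset ℕ)} (h : 0 < excess k ρ T)
    (hv : k < (verts T).card) : ρ < kdens k T := by
  have hv' : (0 : ℚ) < (verts T).card - k := sub_pos.mpr (by exact_mod_cast hv)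
  rw [kdens, lt_div_iff₀ hv']
  unfold excess at h
  linarith

namespace StrictlyBalancedAt

variable {k : ℕ} {ρ : ℚ} {B T : Finset (Finset ℕ)}

lemma excess_union (hB : StrictlyBalancedAt k ρ B) (T : Finset (Finset ℕ)) :
    excess k ρ (T ∪ B) = excess k ρ T +
      (ρ * ((verts B ∩ verts T).card - k) - ((B ∩ T).card - 1)) := by
  have hcard : ((T ∪ B).card : ℚ) + (B ∩ T).card = T.card + B.card := by
    rw [inter_comm]; exact_mod_cast card_union_add_card_inter T B
  have hverts : ((verts (T ∪ B)).card : ℚ) + (verts B ∩ verts T).card =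
      (verts T).card + (verts B).card := by
    rw [verts_union, inter_comm]; exact_mod_cast card_union_add_card_inter _ _
  unfold excess
  linear_combination hcard - ρ * hverts + hB.card_sub_one_eq

lemma card_inter_sub_one_le (hB : StrictlyBalancedAt k ρ B) (hBT : (B ∩ T).Nonempty) :
    ((B ∩ T).card : ℚ) - 1 ≤ ρ * ((verts B ∩ verts T).card - k) := by
  have hle : ρ * (verts (B ∩ T)).card ≤ ρ * (verts B ∩ verts T).card :=
    mul_le_mul_of_nonneg_left (by exact_mod_cast card_le_card (verts_inter_subset B T)) hB.pos.le
  linarith [hB.card_sub_one_le inter_subset_left hBT]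

lemma excess_le_excess_union (hB : StrictlyBalancedAt k ρ B) (hBT : (B ∩ T).Nonempty) :
    excess k ρ T ≤ excess k ρ (T ∪ B) := by
  rw [hB.excess_union T]
  linarith [hB.card_inter_sub_one_le hBT]

lemma subset_or_glued_of_excess_union_eq {d : Finset ℕ} (hB : StrictlyBalancedAt k ρ B)
    (heq : excess k ρ (T ∪ B) = excess k ρ T) (hd : d ∈ B ∩ T) :
    B ⊆ T ∨ (B ∩ T = {d} ∧ verts B ∩ verts T = d) := by
  rw [hB.excess_union T, add_eq_left] at heq
  refine or_iff_not_imp_left.mpr fun hBT => ?_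
  have hproper : B ∩ T ⊂ B :=
    Finset.ssubset_iff_subset_ne.mpr ⟨inter_subset_left, fun h => hBT (h ▸ inter_subset_right)⟩
  have hle : ρ * (verts (B ∩ T)).card ≤ ρ * (verts B ∩ verts T).card :=
    mul_le_mul_of_nonneg_left (by exact_mod_cast card_le_card (verts_inter_subset B T)) hB.pos.le
  have hsingle : B ∩ T = {d} := by
    refine eq_singleton_iff_unique_mem.mpr ⟨hd, fun x hx => ?_⟩
    by_contra hxd
    have h2 : 2 ≤ (B ∩ T).card := one_lt_card.mpr ⟨x, hx, d, hd, hxd⟩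
    linarith [hB.card_sub_one_lt hproper h2]
  refine ⟨hsingle, (eq_of_subset_of_card_le ?_ ?_).symm⟩
  · simpa [hsingle, verts_singleton] using verts_inter_subset B T
  · rw [hsingle, card_singleton, Nat.cast_one, sub_self, sub_zero, mul_eq_zero] at heq
    rw [hB.card_eq d (mem_inter.mp hd).1]
    exact_mod_cast (sub_eq_zero.mp (heq.resolve_left hB.pos.ne')).le

end StrictlyBalancedAt

def prefixUnion (A : ℕ → Finset (Finset ℕ)) (j : ℕ) : Finset (Finset ℕ) :=
  (range j).biUnion A

section prefixUnion

variable {A : ℕ → Finset (Finset ℕ)}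

@[simp] lemma prefixUnion_zero : prefixUnion A 0 = ∅ := rfl

lemma prefixUnion_succ (j : ℕ) : prefixUnion A (j + 1) = prefixUnion A j ∪ A j := by
  rw [prefixUnion, range_add_one, biUnion_insert, union_comm]; rfl

lemma prefixUnion_one : prefixUnion A 1 = A 0 := by
  simp [prefixUnion_succ]

lemma mem_prefixUnion {j : ℕ} {x : Finset ℕ} : x ∈ prefixUnion A j ↔ ∃ i < j, x ∈ A i := by
  simp [prefixUnion]

lemma subset_prefixUnion {i j : ℕ} (h : i < j) : A i ⊆ prefixUnion A j :=
  fun _ hx => mem_prefixUnion.mpr ⟨i, h, hx⟩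

lemma exists_not_subset_prefixUnion {X : Finset (Finset ℕ)} (hX : X.Nonempty) {p : ℕ}
    (hp : X ⊆ prefixUnion A p) :
    ∃ q < p, X ⊆ prefixUnion A q ∪ A q ∧ ¬ X ⊆ prefixUnion A q := by
  induction p with
  | zero => exact absurd (subset_empty.mp hp) hX.ne_empty
  | succ p ih =>
    rw [prefixUnion_succ] at hp
    by_cases hXp : X ⊆ prefixUnion A p
    · obtain ⟨q, hq, hXq⟩ := ih hXp
      exact ⟨q, by omega, hXq⟩
    · exact ⟨p, by omega, hp, hXp⟩

end prefixUnion

/-- `IsSACW n A` for blocks of density `ρ`, with the connecting edges `e` fixed and the index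
`(i + 1) % n` unfolded. -/
structure IsCyclicWalk (k : ℕ) (ρ : ℚ) (n : ℕ) (A : ℕ → Finset (Finset ℕ))
    (e : ℕ → Finset ℕ) : Prop where
  two_le : 2 ≤ n
  balanced : ∀ i < n, StrictlyBalancedAt k ρ (A i)
  injective : ∀ i < n, ∀ j < n, A i = A j → i = j
  edge_injective : ∀ i < n, ∀ j < n, e i = e j → i = j
  mem : ∀ i < n, e i ∈ A i
  mem_succ : ∀ i, i + 1 < n → e i ∈ A (i + 1)
  mem_zero : e (n - 1) ∈ A 0

namespace IsCyclicWalk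

variable {k : ℕ} {ρ : ℚ} {n : ℕ} {A : ℕ → Finset (Finset ℕ)} {e : ℕ → Finset ℕ}

lemma of_isSACW (hA : ∀ i < n, StrictlyBalancedAt k ρ (A i)) (h : IsSACW n A) :
    ∃ e, IsCyclicWalk k ρ n A e := by
  obtain ⟨hn, hinj, e, heinj, he⟩ := h
  refine ⟨e, hn, hA, hinj, heinj, fun i hi => (he i hi).1, fun i hi => ?_, ?_⟩
  · simpa [Nat.mod_eq_of_lt hi] using (he i (by omega)).2
  · simpa [Nat.sub_add_cancel (by omega : 1 ≤ n)] using (he (n - 1) (by omega)).2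

lemma edge_mem_inter_prefixUnion (hW : IsCyclicWalk k ρ n A e) {j : ℕ} (h1 : 1 ≤ j)
    (hj : j < n) : e (j - 1) ∈ A j ∩ prefixUnion A j :=
  mem_inter.mpr ⟨by simpa [Nat.sub_add_cancel h1] using hW.mem_succ (j - 1) (by omega),
    subset_prefixUnion (by omega) (hW.mem (j - 1) (by omega))⟩

lemma excess_prefixUnion_one (hW : IsCyclicWalk k ρ n A e) :
    excess k ρ (prefixUnion A 1) = 0 := by
  rw [prefixUnion_one, excess, (hW.balanced 0 (by linarith [hW.two_le])).card_sub_one_eq,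
    sub_self]

lemma excess_prefixUnion_mono (hW : IsCyclicWalk k ρ n A e) {i j : ℕ} (hi : 1 ≤ i)
    (hij : i ≤ j) (hj : j ≤ n) :
    excess k ρ (prefixUnion A i) ≤ excess k ρ (prefixUnion A j) := by
  induction j, hij using Nat.le_induction with
  | base => exact le_rfl
  | succ j hij ih =>
    rw [prefixUnion_succ]
    exact (ih (by omega)).trans ((hW.balanced j (by omega)).excess_le_excess_union
      ⟨_, hW.edge_mem_inter_prefixUnion (by omega) (by omega)⟩)

lemma subset_or_glued (hW : IsCyclicWalk k ρ n A e)
    (hzero : ∀ j, 1 ≤ j → j ≤ n → excess k ρ (prefixUnion A j) = 0) {j : ℕ} (h1 : 1 ≤ j)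
    (hj : j < n) : A j ⊆ prefixUnion A j ∨ (A j ∩ prefixUnion A j = {e (j - 1)} ∧
      verts (A j) ∩ verts (prefixUnion A j) = e (j - 1)) :=
  (hW.balanced j hj).subset_or_glued_of_excess_union_eq
    (by rw [← prefixUnion_succ, hzero _ (by omega) hj, hzero _ h1 hj.le])
    (hW.edge_mem_inter_prefixUnion h1 hj)

end IsCyclicWalk

namespace IsCyclicWalk

variable {k : ℕ} {ρ : ℚ} {n : ℕ} {A : ℕ → Finset (Finset ℕ)} {e : ℕ → Finset ℕ}

lemma subset_edge_of_glued (hW : IsCyclicWalk k ρ n A e) {i q : ℕ} (hiq : i < q) (hq : q ≤ n)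
    (hglue : ∀ l, i < l → l < q → verts (A l) ∩ verts (prefixUnion A l) = e (l - 1))
    {F : Finset ℕ} (hFi : F ⊆ verts (A i)) (hFq : F ⊆ e (q - 1)) : F ⊆ e i := by
  have key : ∀ d, i + d < q → F ⊆ e (i + d) → F ⊆ e i := by
    intro d
    induction d with
    | zero => exact fun _ h => h
    | succ d ih =>
      intro hd hFd
      refine ih (by omega) ?_
      have hF : F ⊆ verts (A (i + d + 1)) ∩ verts (prefixUnion A (i + d + 1)) :=
        subset_inter (hFd.trans (subset_verts (hW.mem _ (by omega))))
          (hFi.trans (verts_mono (subset_prefixUnion (by omega))))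
      rwa [hglue _ (by omega) (by omega)] at hF
  exact key (q - 1 - i) (by omega) (by rwa [show i + (q - 1 - i) = q - 1 by omega])

lemma false_of_shared_subset (hW : IsCyclicWalk k ρ n A e) {j q : ℕ} (hjq : j < q) (hq : q < n)
    (hglue : ∀ l, j < l → l < q → verts (A l) ∩ verts (prefixUnion A l) = e (l - 1))
    {h F : Finset ℕ} (hh : h ∈ A j) (hFh : F ⊆ h) (hFq : F ⊆ e (q - 1)) (hhq : h ≠ e (q - 1))
    (hF : ρ * (k - F.card) < 1) : False := by
  have hFj : F ⊆ e j := hW.subset_edge_of_glued hjq hq.le hglue (hFh.trans (subset_verts hh)) hFq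
  by_cases hhj : h = e j
  · subst hhj
    have hj1 : j + 1 < q := by
      by_contra hj1
      exact hhq (by rw [show j = q - 1 by omega])
    have hFj1 : F ⊆ e (j + 1) := hW.subset_edge_of_glued hj1 hq.le
      (fun l hl hlq => hglue l (by omega) hlq)
      (hFh.trans (subset_verts (hW.mem_succ j (by omega)))) hFq
    have hne : e j ≠ e (j + 1) := fun he => by
      have := hW.edge_injective j (by omega) (j + 1) (by omega) he
      omega
    exact lt_asymm hF ((hW.balanced (j + 1) (by omega)).one_lt_mul_sub_card
      (hW.mem_succ j (by omega)) (hW.mem (j + 1) (by omega)) hne (subset_inter hFj hFj1))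
  · exact lt_asymm hF ((hW.balanced j (by omega)).one_lt_mul_sub_card hh (hW.mem j (by omega))
      hhj (subset_inter hFh hFj))

lemma false_of_first_covered (hW : IsCyclicWalk k ρ n A e) {m : ℕ} (hm : m < n)
    (hcov : A m ⊆ prefixUnion A m)
    (hglue : ∀ l, 1 ≤ l → l < m → verts (A l) ∩ verts (prefixUnion A l) = e (l - 1)) :
    False := by
  have hAm := hW.balanced m hm
  obtain ⟨q, hqm, hcovq, hncov⟩ :=
    exists_not_subset_prefixUnion (card_pos.mp (by linarith [hAm.three_le_card])) hcov
  have hAq := hW.balanced q (by omega)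
  have hnotsub : ¬ A m ⊆ A q := fun h => hAm.not_ssubset hAq
    (Finset.ssubset_iff_subset_ne.mpr ⟨h, fun he => by
      have := hW.injective m hm q (by omega) he; omega⟩)
  set P := prefixUnion A q
  set X := A m ∩ P
  set Y := A m \ P
  have hYq : Y ⊆ A q := fun x hx =>
    (mem_union.mp (hcovq (mem_sdiff.mp hx).1)).resolve_left (mem_sdiff.mp hx).2
  have hX : X.Nonempty := by
    by_contra hX
    exact hnotsub fun x hx => hYq (mem_sdiff.mpr ⟨hx, fun hxP => hX ⟨x, mem_inter.mpr ⟨hx, hxP⟩⟩⟩)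
  have hq1 : 1 ≤ q := by
    by_contra hq0
    simp [X, P, show q = 0 by omega] at hX
  have hfq := hW.edge_mem_inter_prefixUnion hq1 (by omega)
  have hfY : e (q - 1) ∉ Y := fun h => (mem_sdiff.mp h).2 (mem_inter.mp hfq).2
  have hshared : verts X ∩ verts Y ⊆ e (q - 1) ∩ verts Y := by
    rw [← hglue q hq1 hqm]
    exact fun x hx => mem_inter.mpr ⟨mem_inter.mpr ⟨verts_mono hYq (mem_inter.mp hx).2,
      verts_mono inter_subset_right (mem_inter.mp hx).1⟩, (mem_inter.mp hx).2⟩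
  have hdense : (Y.card : ℚ) ≤ ρ * ((verts Y).card - (verts X ∩ verts Y).card) := by
    have hle : ρ * (verts X ∩ verts Y).card ≤ ρ * (e (q - 1) ∩ verts Y).card :=
      mul_le_mul_of_nonneg_left (by exact_mod_cast card_le_card hshared) hAm.pos.le
    linarith [hAq.card_le_of_insert hYq (mem_inter.mp hfq).1 hfY]
  obtain ⟨hX1, hlt⟩ := hAm.card_eq_one_and_mul_lt_one_of_disjoint_union
    (disjoint_sdiff_inter _ _).symm (sup_inf_sdiff _ _) hX (sdiff_nonempty.mpr hncov) hdense
  obtain ⟨h, hXh⟩ : ∃ h, X = {h} := card_eq_one.mp hX1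
  obtain ⟨j, hjq, hhj⟩ := mem_prefixUnion.mp (mem_inter.mp (hXh ▸ mem_singleton_self h)).2
  have hhq : h ≠ e (q - 1) := fun hhq => hnotsub fun x hx => by
    by_cases hxP : x ∈ P
    · have hxX : x ∈ X := mem_inter.mpr ⟨hx, hxP⟩
      rw [hXh, mem_singleton] at hxX
      exact hxX ▸ hhq ▸ (mem_inter.mp hfq).1
    · exact hYq (mem_sdiff.mpr ⟨hx, hxP⟩)
  refine hW.false_of_shared_subset hjq (by omega) (fun l hl hlq => hglue l (by omega) (by omega))
    hhj ?_ (hshared.trans inter_subset_left) hhq hlt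
  exact inter_subset_left.trans (by rw [hXh, verts_singleton])

theorem excess_pos (hW : IsCyclicWalk k ρ n A e) : 0 < excess k ρ (prefixUnion A n) := by
  by_contra! hle
  have hzero : ∀ j, 1 ≤ j → j ≤ n → excess k ρ (prefixUnion A j) = 0 := fun j h1 hj =>
    le_antisymm ((hW.excess_prefixUnion_mono h1 hj le_rfl).trans hle)
      (hW.excess_prefixUnion_one ▸ hW.excess_prefixUnion_mono le_rfl h1 hj)
  have hn := hW.two_le
  -- the closing edge `e (n - 1)` lies in `A 0`, so `A (n - 1)` meets the earlier blocks twice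
  have hcov : ∃ m, 1 ≤ m ∧ m < n ∧ A m ⊆ prefixUnion A m := by
    refine ⟨n - 1, by omega, by omega,
      (hW.subset_or_glued hzero (by omega) (by omega)).resolve_right ?_⟩
    rintro ⟨hsingle, -⟩
    have hlast : e (n - 1) ∈ A (n - 1) ∩ prefixUnion A (n - 1) :=
      mem_inter.mpr ⟨hW.mem _ (by omega), subset_prefixUnion (by omega) hW.mem_zero⟩
    rw [hsingle, mem_singleton] at hlast
    have := hW.edge_injective _ (by omega) _ (by omega) hlast
    omega
  classical
  obtain ⟨-, hmn, hm⟩ := Nat.find_spec hcov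
  exact hW.false_of_first_covered hmn hm fun l hl1 hlm =>
    ((hW.subset_or_glued hzero hl1 (by omega)).resolve_left fun h =>
      Nat.find_min hcov hlm ⟨hl1, by omega, h⟩).2

end IsCyclicWalk

theorem cyclic_walk_dense_general
    (k : ℕ) (ρ : ℚ) (n : ℕ)
    (A : ℕ → Finset (Finset ℕ))
    (hunif : ∀ i < n, ∀ e ∈ A i, e.card = k)
    (hsb : ∀ i < n, StrictlyKBalanced k (A i))
    (hd : ∀ i < n, kdens k (A i) = ρ)
    (hwalk : IsSACW n A)
    (S : Finset (Finset ℕ)) (hS : S = (Finset.range n).biUnion A) :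
    ∃ e ∈ S, ρ < ((S.card : ℚ) - 1) / (((verts S).card : ℚ) - (k : ℚ)) := by
  obtain ⟨e, hW⟩ := IsCyclicWalk.of_isSACW (fun i hi =>
    StrictlyBalancedAt.of_strictlyKBalanced (hunif i hi) (hsb i hi) (hd i hi)) hwalk
  have hn : 0 < n := by linarith [hW.two_le]
  subst hS
  have hA0 : A 0 ⊆ prefixUnion A n := subset_prefixUnion hn
  refine ⟨e 0, hA0 (hW.mem 0 hn), lt_kdens_of_excess_pos hW.excess_pos ?_⟩
  exact (hW.balanced 0 hn).lt_card_verts.trans_le (card_le_card (verts_mono hA0))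

/-- if distinct strictly `k`-balanced `k`-graphs `A 0, …, A (n-1)`, all of
`k`-density `ρ`, form a self-avoiding cyclic walk, then their union `S` has an edge `e` with
`ρ_{S,e} > ρ`. -/
theorem cyclic_walk_dense
    (k : ℕ) (hk : 2 ≤ k) (ρ : ℚ) (n : ℕ)
    (A : ℕ → Finset (Finset ℕ))
    (hunif : ∀ i < n, ∀ e ∈ A i, e.card = k)
    (hsb : ∀ i < n, StrictlyKBalanced k (A i))
    (hd : ∀ i < n, kdens k (A i) = ρ)
    (hwalk : IsSACW n A)
    (S : Finset (Finset ℕ)) (hS : S = (Finset.range n).biUnion A) :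
    ∃ e ∈ S, ρ < ((S.card : ℚ) - 1) / (((verts S).card : ℚ) - (k : ℚ)) :=
  cyclic_walk_dense_general k ρ n A hunif hsb hd hwalk S hS
end

section
/- Let F₁, F₂ be two copies of a k-uniform hypergraph F appearing as a subsequence of a vertex-separated loose path of copies of F, where (F, f) is balanced with density ρ_F for every edge f. Let A be a subgraph of F₁ or of F₂ and set I := V(A) ∩ V(F₁) ∩ V(F₂). Then ρ_{A,I} ≤ ρ_F. -/
open Finset

/-- The union of the hypergraphs `B j` over `j ∈ s`. -/
def pUnion (B : ℕ → Finset (Finset ℕ)) (s : Finset ℕ) : Finset (Finset ℕ) := s.biUnion B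

/-- `qfun B i = 1 + ∑_{j < i} (|B j| - 1)`. -/
def qfun (B : ℕ → Finset (Finset ℕ)) (i : ℕ) : ℕ :=
  1 + ∑ j ∈ Finset.range i, ((B j).card - 1)

/-- `B 0, …, B (n-1)` is a vertex-separated loose path starting at `I`: there is an
enumeration `e 0, …, e (qfun B n - 1)` of the edges of `B 0 + … + B (n-1)` with `e 0 = I`,
each `B i` consisting of the block of edges with indices in `[qfun B i - 1, qfun B (i+1) - 1]`,
such that for each `0 < i < n` the vertex sets of `B 0 + … + B (i-1)` and of
`B i + … + B (n-1)` intersect exactly in the shared edge `e (qfun B i - 1)`. -/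
def IsVSLoosePath (n : ℕ) (B : ℕ → Finset (Finset ℕ)) (I : Finset ℕ) : Prop :=
  ∃ e : ℕ → Finset ℕ,
    (∀ i < qfun B n, ∀ j < qfun B n, e i = e j → i = j) ∧
    e 0 = I ∧
    (∀ i < n, B i =
      ((Finset.range (qfun B n)).filter
          (fun j => qfun B i - 1 ≤ j ∧ j ≤ qfun B (i + 1) - 1)).image e) ∧
    (∀ i, 0 < i → i < n →
      verts (pUnion B (Finset.range i)) ∩
          verts (pUnion B ((Finset.range n).filter (fun j => i ≤ j))) =
        e (qfun B i - 1))

/-- `B'` is a copy of `F`. -/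
def IsCopy (F B' : Finset (Finset ℕ)) : Prop :=
  ∃ φ : ℕ → ℕ, Set.InjOn φ ↑(verts F) ∧ B' = F.image (fun f => f.image φ)


namespace Helpers

lemma mem_verts {A : Finset (Finset ℕ)} {x : ℕ} : x ∈ verts A ↔ ∃ a ∈ A, x ∈ a := by
  simp [verts]

lemma edge_subset_verts {A : Finset (Finset ℕ)} {a : Finset ℕ} (ha : a ∈ A) : a ⊆ verts A :=
  Finset.le_sup (f := id) ha

lemma verts_mono {A B : Finset (Finset ℕ)} (h : A ⊆ B) : verts A ⊆ verts B :=
  Finset.le_iff_subset.mp (Finset.sup_mono h)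

lemma verts_subset_iff {A : Finset (Finset ℕ)} {V : Finset ℕ} :
    verts A ⊆ V ↔ ∀ a ∈ A, a ⊆ V := by
  simp only [← Finset.le_iff_subset, verts]
  exact Finset.sup_le_iff

lemma ind_verts_union (A : Finset (Finset ℕ)) (I : Finset ℕ) : ind A (verts A ∪ I) = A := by
  unfold ind
  exact Finset.filter_true_of_mem fun a ha =>
    (edge_subset_verts ha).trans Finset.subset_union_left

lemma ind_verts (A : Finset (Finset ℕ)) : ind A (verts A) = A := by
  unfold ind
  exact Finset.filter_true_of_mem fun a ha => edge_subset_verts ha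

lemma ind_inter_verts (A : Finset (Finset ℕ)) (I : Finset ℕ) :
    ind A (verts A ∩ I) = ind A I := by
  unfold ind
  refine Finset.filter_congr fun a ha => ?_
  exact ⟨fun h => h.trans Finset.inter_subset_right,
    fun h => Finset.subset_inter (edge_subset_verts ha) h⟩

lemma card_union_sub_cast (s t : Finset ℕ) :
    ((s ∪ t).card : ℚ) - t.card = (s.card : ℚ) - (s ∩ t).card := by
  have h := Finset.card_union_add_card_inter s t
  have h2 : ((s ∪ t).card : ℚ) + (s ∩ t).card = s.card + t.card := by exact_mod_cast congrArg (Nat.cast : ℕ → ℚ) h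
  linarith

lemma tdens_inter (A : Finset (Finset ℕ)) (I : Finset ℕ) :
    tdens A (verts A ∩ I) = tdens A I := by
  unfold tdens _root_.dens
  have h1 : verts A ∪ verts A ∩ I = verts A := sup_inf_self
  rw [h1]
  by_cases hsub : verts A ⊆ I
  · rw [if_pos (Finset.inter_eq_left.mpr hsub).symm, if_pos (Finset.union_eq_right.mpr hsub)]
  · rw [if_neg (fun h => hsub (by rw [h]; exact Finset.inter_subset_right)),
      if_neg (fun h => hsub (Finset.union_eq_right.mp h)),
      ind_verts, ind_verts_union, ind_inter_verts, ← card_union_sub_cast (verts A) I]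

end Helpers

namespace Helpers

variable {φ : ℕ → ℕ} {V : Finset ℕ}

lemma image_subset_iff_of_injOn (hφ : Set.InjOn φ ↑V) {s t : Finset ℕ}
    (hs : s ⊆ V) (ht : t ⊆ V) : s.image φ ⊆ t.image φ ↔ s ⊆ t := by
  constructor
  · intro h a has
    obtain ⟨b, hb, hba⟩ := Finset.mem_image.mp (h (Finset.mem_image_of_mem φ has))
    rwa [← hφ (ht hb) (hs has) hba]
  · exact fun h => Finset.image_subset_image h

lemma image_eq_iff_of_injOn (hφ : Set.InjOn φ ↑V) {s t : Finset ℕ}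
    (hs : s ⊆ V) (ht : t ⊆ V) : s.image φ = t.image φ ↔ s = t := by
  constructor
  · intro h
    exact Finset.Subset.antisymm
      ((image_subset_iff_of_injOn hφ hs ht).mp h.le)
      ((image_subset_iff_of_injOn hφ ht hs).mp h.ge)
  · rintro rfl; rfl

lemma verts_image (A : Finset (Finset ℕ)) :
    verts (A.image (fun f => f.image φ)) = (verts A).image φ := by
  ext x
  simp only [mem_verts, Finset.mem_image]
  constructor
  · rintro ⟨a, ⟨f, hf, rfl⟩, hx⟩
    obtain ⟨y, hy, rfl⟩ := Finset.mem_image.mp hx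
    exact ⟨y, ⟨f, hf, hy⟩, rfl⟩
  · rintro ⟨y, hy, rfl⟩
    obtain ⟨f, hf, hyf⟩ := hy
    exact ⟨f.image φ, ⟨f, hf, rfl⟩, Finset.mem_image_of_mem φ hyf⟩

lemma ind_image (hφ : Set.InjOn φ ↑V) (A : Finset (Finset ℕ)) (I : Finset ℕ)
    (hA : ∀ a ∈ A, a ⊆ V) (hI : I ⊆ V) :
    ind (A.image (fun f => f.image φ)) (I.image φ) = (ind A I).image (fun f => f.image φ) := by
  unfold ind
  ext g
  simp only [Finset.mem_filter, Finset.mem_image]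
  constructor
  · rintro ⟨⟨f, hf, rfl⟩, hsub⟩
    exact ⟨f, ⟨hf, (image_subset_iff_of_injOn hφ (hA f hf) hI).mp hsub⟩, rfl⟩
  · rintro ⟨f, ⟨hf, hsub⟩, rfl⟩
    exact ⟨⟨f, hf, rfl⟩, Finset.image_subset_image hsub⟩

lemma card_mapE (hφ : Set.InjOn φ ↑V) (S : Finset (Finset ℕ)) (hS : ∀ a ∈ S, a ⊆ V) :
    (S.image (fun f => f.image φ)).card = S.card :=
  Finset.card_image_of_injOn fun a ha b hb hab =>
    (image_eq_iff_of_injOn hφ (hS a ha) (hS b hb)).mp hab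

lemma tdens_image (hφ : Set.InjOn φ ↑V) (A : Finset (Finset ℕ)) (I : Finset ℕ)
    (hA : ∀ a ∈ A, a ⊆ V) (hI : I ⊆ V) :
    tdens (A.image (fun f => f.image φ)) (I.image φ) = tdens A I := by
  have hVA : verts A ⊆ V := verts_subset_iff.mpr hA
  have hU : verts A ∪ I ⊆ V := Finset.union_subset hVA hI
  unfold tdens _root_.dens
  rw [verts_image, ← Finset.image_union]
  by_cases h : verts A ∪ I = I
  · rw [if_pos (by rw [h]), if_pos h]
  · rw [if_neg (fun hh => h ((image_eq_iff_of_injOn hφ hU hI).mp hh)), if_neg h,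
      ind_image hφ A _ hA hU, ind_image hφ A I hA hI,
      card_mapE hφ (ind A (verts A ∪ I)) (fun a ha => hA a (Finset.filter_subset _ _ ha)),
      card_mapE hφ (ind A I) (fun a ha => hA a (Finset.filter_subset _ _ ha)),
      Finset.card_image_of_injOn (hφ.mono (by exact_mod_cast hU)),
      Finset.card_image_of_injOn (hφ.mono (by exact_mod_cast hI))]

end Helpers

namespace Helpers

/-- Basic facts derived from two distinct edges of `F`. -/
lemma rho_facts (k : ℕ) (F : Finset (Finset ℕ)) (hFk : ∀ e ∈ F, e.card = k)
    (hbal : ∀ f ∈ F, ∀ B' ⊆ F, tdens B' f ≤ kdens k F)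
    {g₁ g₂ : Finset ℕ} (hg₁ : g₁ ∈ F) (hg₂ : g₂ ∈ F) (hne : g₁ ≠ g₂) :
    0 < kdens k F ∧ 1 ≤ kdens k F * ((k : ℚ) - ((g₁ ∩ g₂).card : ℚ)) ∧
      (g₁ ∩ g₂).card < k := by
  have hc1 := hFk g₁ hg₁
  have hc2 := hFk g₂ hg₂
  have hcap : (g₁ ∩ g₂).card < k := by
    rcases lt_or_eq_of_le (le_trans (Finset.card_le_card Finset.inter_subset_left) hc1.le)
      with h | h
    · exact h
    · exfalso
      have h1 : g₁ ∩ g₂ = g₁ :=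
        Finset.eq_of_subset_of_card_le Finset.inter_subset_left (by omega)
      exact hne (Finset.eq_of_subset_of_card_le (Finset.inter_eq_left.mp h1) (by omega))
  have hcup : k < (g₁ ∪ g₂).card := by
    have := Finset.card_union_add_card_inter g₁ g₂
    omega
  have hverts : verts ({g₁, g₂} : Finset (Finset ℕ)) = g₁ ∪ g₂ := by
    simp [verts]
  have hind2 : ind ({g₁, g₂} : Finset (Finset ℕ)) g₂ = {g₂} := by
    unfold ind
    rw [Finset.filter_insert, if_neg, Finset.filter_singleton, if_pos Finset.Subset.rfl]
    intro hsub
    exact hne (Finset.eq_of_subset_of_card_le hsub (by omega))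
  have hcard2 : ({g₁, g₂} : Finset (Finset ℕ)).card = 2 := by
    rw [Finset.card_insert_of_notMem (by simpa using hne), Finset.card_singleton]
  have hU : verts ({g₁, g₂} : Finset (Finset ℕ)) ∪ g₂ = g₁ ∪ g₂ := by
    rw [hverts, Finset.union_assoc, Finset.union_self]
  have hbal2 := hbal g₂ hg₂ {g₁, g₂} (by
    intro a ha
    rcases Finset.mem_insert.mp ha with rfl | ha
    · exact hg₁
    · rwa [Finset.mem_singleton.mp ha])
  have htd : tdens ({g₁, g₂} : Finset (Finset ℕ)) g₂ =
      1 / (((g₁ ∪ g₂).card : ℚ) - k) := by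
    unfold tdens _root_.dens
    rw [ind_verts_union, hind2, hU, hcard2, Finset.card_singleton,
      if_neg (show ¬(g₁ ∪ g₂ = g₂) by
        intro hh
        have h3 := Finset.card_le_card hh.le
        omega)]
    rw [hc2]
    congr 1
    norm_num
  rw [htd] at hbal2
  have hden : (0:ℚ) < ((g₁ ∪ g₂).card : ℚ) - k := by
    have : (k:ℚ) < ((g₁ ∪ g₂).card : ℚ) := by exact_mod_cast hcup
    linarith
  have hρpos : 0 < kdens k F := lt_of_lt_of_le (by positivity) hbal2
  have h1 : 1 ≤ kdens k F * (((g₁ ∪ g₂).card : ℚ) - k) := by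
    rw [div_le_iff₀ hden] at hbal2
    linarith
  refine ⟨hρpos, ?_, hcap⟩
  have hinter : ((g₁ ∪ g₂).card : ℚ) - k = (k : ℚ) - ((g₁ ∩ g₂).card : ℚ) := by
    have := Finset.card_union_add_card_inter g₁ g₂
    have h2 : ((g₁ ∪ g₂).card : ℚ) + ((g₁ ∩ g₂).card : ℚ) = (g₁.card : ℚ) + g₂.card := by
      exact_mod_cast congrArg (Nat.cast : ℕ → ℚ) this
    rw [hc1, hc2] at h2
    push_cast at h2 ⊢
    linarith
  rwa [hinter] at h1

end Helpers

namespace Helpers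

lemma key2 (k : ℕ) (F : Finset (Finset ℕ)) (hFk : ∀ e ∈ F, e.card = k)
    (hbal : ∀ f ∈ F, ∀ B' ⊆ F, tdens B' f ≤ kdens k F)
    {A : Finset (Finset ℕ)} (hAF : A ⊆ F) {f₂ I : Finset ℕ}
    (hf₂ : f₂ ∈ F) (hIf : I ⊆ f₂) (hIA : I ⊆ verts A)
    {g₁ g₂ : Finset ℕ} (hg₁ : g₁ ∈ F) (hg₂ : g₂ ∈ F) (hg : g₁ ≠ g₂)
    (hIc : I.card ≤ (g₁ ∩ g₂).card) :
    tdens A I ≤ kdens k F := by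
  obtain ⟨hρ, hρ1, hcap⟩ := rho_facts k F hFk hbal hg₁ hg₂ hg
  rcases A.eq_empty_or_nonempty with rfl | ⟨a₀, ha₀⟩
  · have hI : I = ∅ := Finset.subset_empty.mp (by simpa [verts] using hIA)
    subst hI
    simp only [tdens, _root_.dens, verts, Finset.sup_empty, Finset.bot_eq_empty,
      Finset.union_self, if_pos rfl]
    exact hρ.le
  · have hIk : I.card < k := lt_of_le_of_lt hIc hcap
    have ha₀k : a₀.card = k := hFk a₀ (hAF ha₀)
    have hvk : k ≤ (verts A).card := ha₀k ▸ Finset.card_le_card (edge_subset_verts ha₀)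
    have hindI : ind A I = ∅ := by
      rw [Finset.eq_empty_iff_forall_notMem]
      intro a ha
      have h1 : a ∈ A := Finset.mem_of_mem_filter a ha
      have h2 : a ⊆ I := (Finset.mem_filter.mp ha).2
      have := Finset.card_le_card h2
      rw [hFk a (hAF h1)] at this
      omega
    have hUA : verts A ∪ I = verts A := Finset.union_eq_left.mpr hIA
    have hgI : verts A ≠ I := by
      intro h
      rw [← h] at hIk
      omega
    have htdI : tdens A I = (A.card : ℚ) / (((verts A).card : ℚ) - I.card) := by
      unfold tdens _root_.dens
      rw [ind_verts_union, hindI, hUA, if_neg hgI, Finset.card_empty]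
      norm_num
    have hdenI : (0:ℚ) < ((verts A).card : ℚ) - I.card := by
      have h1 : (I.card : ℚ) < k := by exact_mod_cast hIk
      have h2 : (k : ℚ) ≤ ((verts A).card : ℚ) := by exact_mod_cast hvk
      linarith
    have hρ1' : 1 ≤ kdens k F * ((k:ℚ) - I.card) := by
      have h1 : (I.card : ℚ) ≤ ((g₁ ∩ g₂).card : ℚ) := by exact_mod_cast hIc
      nlinarith
    rw [htdI, div_le_iff₀ hdenI]
    by_cases hf₂A : f₂ ∈ A
    · by_cases hAf : verts A = f₂
      · have hA1 : A = {f₂} := by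
          apply Finset.Subset.antisymm
          · intro a ha
            have h1 : a ⊆ f₂ := hAf ▸ edge_subset_verts ha
            have h2 := hFk a (hAF ha)
            rw [Finset.mem_singleton]
            exact Finset.eq_of_subset_of_card_le h1 (by rw [h2, hFk f₂ hf₂])
          · intro a ha
            rwa [Finset.mem_singleton.mp ha]
        have hA1c : (A.card : ℚ) = 1 := by rw [hA1, Finset.card_singleton]; norm_num
        have hvA : ((verts A).card : ℚ) = k := by rw [hAf, hFk f₂ hf₂]
        rw [hA1c, hvA]
        exact hρ1'
      · have hf₂v : f₂ ⊆ verts A := edge_subset_verts hf₂A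
        have hindf₂ : ind A f₂ = {f₂} := by
          ext a
          unfold ind
          simp only [Finset.mem_filter, Finset.mem_singleton]
          constructor
          · rintro ⟨ha, hsub⟩
            exact Finset.eq_of_subset_of_card_le hsub
              (by rw [hFk a (hAF ha), hFk f₂ hf₂])
          · rintro rfl
            exact ⟨hf₂A, Finset.Subset.rfl⟩
        have hU2 : verts A ∪ f₂ = verts A := Finset.union_eq_left.mpr hf₂v
        have htd2 : tdens A f₂ = ((A.card : ℚ) - 1) / (((verts A).card : ℚ) - k) := by
          unfold tdens _root_.dens
          rw [ind_verts_union, hindf₂, hU2, if_neg hAf, Finset.card_singleton,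
            hFk f₂ hf₂]
          norm_num
        have hvk1 : k < (verts A).card := by
          by_contra hle
          push_neg at hle
          exact hAf (Finset.eq_of_subset_of_card_le hf₂v
            (by rw [hFk f₂ hf₂]; omega)).symm
        have hden2 : (0:ℚ) < ((verts A).card : ℚ) - k := by
          have : (k:ℚ) < ((verts A).card : ℚ) := by exact_mod_cast hvk1
          linarith
        have hb := hbal f₂ hf₂ A hAF
        rw [htd2, div_le_iff₀ hden2] at hb
        have hsplit : kdens k F * (((verts A).card : ℚ) - I.card) =
            kdens k F * (((verts A).card : ℚ) - k) + kdens k F * ((k:ℚ) - I.card) := by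
          ring
        linarith
    · have hA'F : insert f₂ A ⊆ F := Finset.insert_subset hf₂ hAF
      have hvins : verts (insert f₂ A) = f₂ ∪ verts A := by
        simp [verts, Finset.sup_insert]
      have hnsub : ¬ verts A ⊆ f₂ := by
        intro h
        have ha₀f : a₀ = f₂ := Finset.eq_of_subset_of_card_le
          ((edge_subset_verts ha₀).trans h) (by rw [ha₀k, hFk f₂ hf₂])
        exact hf₂A (ha₀f ▸ ha₀)
      have hU' : verts (insert f₂ A) ∪ f₂ = f₂ ∪ verts A := by
        rw [hvins]
        exact Finset.union_eq_left.mpr (Finset.subset_union_left)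
      have hguard : f₂ ∪ verts A ≠ f₂ := fun h => hnsub (Finset.union_eq_left.mp h)
      have hindf₂' : ind (insert f₂ A) f₂ = {f₂} := by
        ext a
        unfold ind
        simp only [Finset.mem_filter, Finset.mem_singleton, Finset.mem_insert]
        constructor
        · rintro ⟨ha | ha, hsub⟩
          · exact ha
          · exact Finset.eq_of_subset_of_card_le hsub
              (by rw [hFk a (hAF ha), hFk f₂ hf₂])
        · rintro rfl
          exact ⟨Or.inl rfl, Finset.Subset.rfl⟩
      have hcardA' : (insert f₂ A).card = A.card + 1 := Finset.card_insert_of_notMem hf₂A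
      have htd' : tdens (insert f₂ A) f₂ =
          (A.card : ℚ) / (((f₂ ∪ verts A).card : ℚ) - k) := by
        unfold tdens _root_.dens
        rw [ind_verts_union, hindf₂', hU', if_neg hguard, hcardA', Finset.card_singleton,
          hFk f₂ hf₂]
        congr 1
        push_cast
        ring
      have hcupA : k < (f₂ ∪ verts A).card := by
        by_contra hle
        push_neg at hle
        exact hguard (Finset.eq_of_subset_of_card_le Finset.subset_union_left
          (by rw [hFk f₂ hf₂]; omega)).symm
      have hden' : (0:ℚ) < ((f₂ ∪ verts A).card : ℚ) - k := by
        have : (k:ℚ) < ((f₂ ∪ verts A).card : ℚ) := by exact_mod_cast hcupA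
        linarith
      have hb := hbal f₂ hf₂ (insert f₂ A) hA'F
      rw [htd', div_le_iff₀ hden'] at hb
      have hIle : I.card ≤ (f₂ ∩ verts A).card :=
        Finset.card_le_card (Finset.subset_inter hIf hIA)
      have hkey : (((f₂ ∪ verts A).card : ℚ) - k) ≤ ((verts A).card : ℚ) - I.card := by
        have h := Finset.card_union_add_card_inter f₂ (verts A)
        rw [hFk f₂ hf₂] at h
        have h1 : ((f₂ ∪ verts A).card : ℚ) + ((f₂ ∩ verts A).card : ℚ) =
            (k:ℚ) + ((verts A).card : ℚ) := by exact_mod_cast congrArg (Nat.cast : ℕ → ℚ) h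
        have h2 : (I.card : ℚ) ≤ ((f₂ ∩ verts A).card : ℚ) := by exact_mod_cast hIle
        linarith
      exact hb.trans (mul_le_mul_of_nonneg_left hkey hρ.le)

lemma key1 (k : ℕ) (F : Finset (Finset ℕ))
    (hbal : ∀ f ∈ F, ∀ B' ⊆ F, tdens B' f ≤ kdens k F)
    {A : Finset (Finset ℕ)} (hAF : A ⊆ F) {f : Finset ℕ} (hf : f ∈ F) :
    tdens A (verts A ∩ f) ≤ kdens k F := by
  rw [tdens_inter]
  exact hbal f hf A hAF

end Helpers

namespace Helpers

lemma copy_decomp {F Bt : Finset (Finset ℕ)} (hBt : IsCopy F Bt)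
    {A : Finset (Finset ℕ)} (hAB : A ⊆ Bt) :
    ∃ φ : ℕ → ℕ, ∃ A' : Finset (Finset ℕ), Set.InjOn φ ↑(verts F) ∧
      Bt = F.image (fun f => f.image φ) ∧ A' ⊆ F ∧
      A = A'.image (fun f => f.image φ) := by
  obtain ⟨φ, hφ, hBeq⟩ := hBt
  refine ⟨φ, F.filter (fun f => f.image φ ∈ A), hφ, hBeq, Finset.filter_subset _ _, ?_⟩
  ext g
  simp only [Finset.mem_image, Finset.mem_filter]
  constructor
  · intro hg
    obtain ⟨f, hf, rfl⟩ := Finset.mem_image.mp (hBeq ▸ hAB hg)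
    exact ⟨f, ⟨hf, hg⟩, rfl⟩
  · rintro ⟨f, ⟨_, hf⟩, rfl⟩
    exact hf

lemma mem_copy {F Bt : Finset (Finset ℕ)} {φ : ℕ → ℕ}
    (hBeq : Bt = F.image (fun f => f.image φ)) {f : Finset ℕ} (hf : f ∈ Bt) :
    ∃ f' ∈ F, f = f'.image φ := by
  obtain ⟨f', hf', rfl⟩ := Finset.mem_image.mp (hBeq ▸ hf)
  exact ⟨f', hf', rfl⟩

lemma copy_case1 (k : ℕ) (F : Finset (Finset ℕ))
    (hbal : ∀ f ∈ F, ∀ B' ⊆ F, tdens B' f ≤ kdens k F)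
    {Bt : Finset (Finset ℕ)} (hBt : IsCopy F Bt)
    {A : Finset (Finset ℕ)} (hAB : A ⊆ Bt) {f : Finset ℕ} (hf : f ∈ Bt) :
    tdens A (verts A ∩ f) ≤ kdens k F := by
  obtain ⟨φ, A', hφ, hBeq, hA'F, rfl⟩ := copy_decomp hBt hAB
  obtain ⟨f', hf', rfl⟩ := mem_copy hBeq hf
  have hA'V : ∀ a ∈ A', a ⊆ verts F := fun a ha => edge_subset_verts (hA'F ha)
  have hvA' : verts A' ⊆ verts F := verts_subset_iff.mpr hA'V
  have hf'V : f' ⊆ verts F := edge_subset_verts hf'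
  have hinter : verts (A'.image (fun f => f.image φ)) ∩ f'.image φ =
      (verts A' ∩ f').image φ := by
    rw [verts_image,
      Finset.image_inter_of_injOn _ _ (hφ.mono (by
        exact_mod_cast Finset.union_subset hvA' hf'V))]
  rw [hinter, tdens_image hφ A' (verts A' ∩ f') hA'V
    (Finset.inter_subset_left.trans hvA'), tdens_inter]
  exact hbal f' hf' A' hA'F

lemma copy_case2 (k : ℕ) (F : Finset (Finset ℕ)) (hFk : ∀ e ∈ F, e.card = k)
    (hbal : ∀ f ∈ F, ∀ B' ⊆ F, tdens B' f ≤ kdens k F)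
    {Bt Bu : Finset (Finset ℕ)} (hBt : IsCopy F Bt) (hBu : IsCopy F Bu)
    {A : Finset (Finset ℕ)} (hAB : A ⊆ Bt) {f₁ f₂ I : Finset ℕ}
    (hf₂t : f₂ ∈ Bt) (hf₁u : f₁ ∈ Bu) (hf₂u : f₂ ∈ Bu) (hne : f₁ ≠ f₂)
    (hI₂ : I ⊆ f₂) (hI₁ : I ⊆ f₁) (hIA : I ⊆ verts A) :
    tdens A I ≤ kdens k F := by
  -- decompose the copy containing A
  obtain ⟨φ, A', hφ, hBeq, hA'F, rfl⟩ := copy_decomp hBt hAB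
  obtain ⟨f₂', hf₂', hf₂eq⟩ := mem_copy hBeq hf₂t
  have hA'V : ∀ a ∈ A', a ⊆ verts F := fun a ha => edge_subset_verts (hA'F ha)
  have hvA' : verts A' ⊆ verts F := verts_subset_iff.mpr hA'V
  have hf₂V : f₂' ⊆ verts F := edge_subset_verts hf₂'
  -- the two distinct edges in the copy Bu
  obtain ⟨ψ, hψ, hBueq⟩ := hBu
  obtain ⟨g₁, hg₁, hg₁eq⟩ := mem_copy hBueq hf₁u
  obtain ⟨g₂, hg₂, hg₂eq⟩ := mem_copy hBueq hf₂u
  have hgV : ∀ g ∈ F, g ⊆ verts F := fun g hg => edge_subset_verts hg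
  have hgne : g₁ ≠ g₂ := by
    rintro rfl
    exact hne (hg₁eq ▸ hg₂eq ▸ rfl)
  have hf12 : f₁ ∩ f₂ = (g₁ ∩ g₂).image ψ := by
    rw [hg₁eq, hg₂eq,
      Finset.image_inter_of_injOn _ _ (hψ.mono (by
        exact_mod_cast Finset.union_subset (hgV g₁ hg₁) (hgV g₂ hg₂)))]
  have hf12card : (f₁ ∩ f₂).card = (g₁ ∩ g₂).card := by
    rw [hf12]
    exact Finset.card_image_of_injOn (hψ.mono (by
      exact_mod_cast Finset.inter_subset_left.trans (hgV g₁ hg₁)))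
  -- pull I back along φ
  have hIV : I ⊆ (verts F).image φ := by
    intro x hx
    exact Finset.image_subset_image hvA' ((verts_image A' ▸ hIA) hx)
  set I' : Finset ℕ := (verts F).filter (fun x => φ x ∈ I) with hI'def
  have hI'V : I' ⊆ verts F := Finset.filter_subset _ _
  have hI'img : I'.image φ = I := by
    apply Finset.Subset.antisymm
    · intro y hy
      obtain ⟨x, hx, rfl⟩ := Finset.mem_image.mp hy
      exact (Finset.mem_filter.mp hx).2
    · intro y hy
      obtain ⟨x, hx, rfl⟩ := Finset.mem_image.mp (hIV hy)
      exact Finset.mem_image_of_mem φ (Finset.mem_filter.mpr ⟨hx, hy⟩)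
  have hpull : ∀ s : Finset ℕ, s ⊆ verts F → I ⊆ s.image φ → I' ⊆ s := by
    intro s hs hIs x hx
    obtain ⟨hxV, hxI⟩ := Finset.mem_filter.mp hx
    obtain ⟨b, hb, hba⟩ := Finset.mem_image.mp (hIs hxI)
    rwa [← hφ (hs hb) hxV hba]
  have hI'f₂ : I' ⊆ f₂' := hpull f₂' hf₂V (hf₂eq ▸ hI₂)
  have hI'A : I' ⊆ verts A' := hpull (verts A') hvA' (verts_image A' ▸ hIA)
  have hI'card : I'.card ≤ (g₁ ∩ g₂).card := by
    rw [← hf12card]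
    have h1 : I'.card = I.card := by
      rw [← hI'img]
      exact (Finset.card_image_of_injOn (hφ.mono (by exact_mod_cast hI'V))).symm
    rw [h1]
    exact Finset.card_le_card (Finset.subset_inter hI₁ hI₂)
  rw [← hI'img, tdens_image hφ A' I' hA'V hI'V]
  exact key2 k F hFk hbal hA'F hf₂' hI'f₂ hI'A hg₁ hg₂ hgne hI'card
end Helpers

/-- if `F₁ = B i` and `F₂ = B j` (`i < j`) are members of a vertex-separated
loose path of copies of `F`, `A` is a subgraph of `F₁` or of `F₂`, and
`I := V(A) ∩ V(F₁) ∩ V(F₂)`, then `ρ_{A,I} ≤ ρ_F`. -/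
theorem subgraph_of_copy_density
    (k : ℕ) (hk : 2 ≤ k)
    (F : Finset (Finset ℕ)) (hFk : ∀ e ∈ F, e.card = k) (hF2 : 2 ≤ F.card)
    (hbal : ∀ f ∈ F, ∀ B' ⊆ F, tdens B' f ≤ kdens k F)
    (n : ℕ) (B : ℕ → Finset (Finset ℕ)) (I0 : Finset ℕ) (hI0 : I0.card = k)
    (hpath : IsVSLoosePath n B I0) (hcopy : ∀ i < n, IsCopy F (B i))
    (i j : ℕ) (hij : i < j) (hjn : j < n)
    (A : Finset (Finset ℕ)) (hA : A ⊆ B i ∨ A ⊆ B j) :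
    tdens A (verts A ∩ verts (B i) ∩ verts (B j)) ≤ kdens k F := by
  classical
  obtain ⟨e, einj, he0, hBeq, hsep⟩ := hpath
  have hin : i < n := lt_trans hij hjn
  -- cardinality of the blocks
  have hcard : ∀ t < n, 2 ≤ (B t).card := by
    intro t ht
    obtain ⟨φ, hφ, hBteq⟩ := hcopy t ht
    have : (B t).card = F.card := by
      rw [hBteq]
      exact Helpers.card_mapE hφ F (fun a ha => Helpers.edge_subset_verts ha)
    omega
  -- qfun facts
  have hq1 : ∀ t, 1 ≤ qfun B t := fun t => Nat.le_add_right 1 _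
  have hqmono : ∀ s t : ℕ, s ≤ t → qfun B s ≤ qfun B t := by
    intro s t hst
    unfold qfun
    exact Nat.add_le_add_left (Finset.sum_le_sum_of_subset
      (Finset.range_subset_range.mpr hst)) 1
  have hqstrict : ∀ t < n, qfun B t < qfun B (t + 1) := by
    intro t ht
    have h2 := hcard t ht
    have : qfun B (t + 1) = qfun B t + ((B t).card - 1) := by
      unfold qfun
      rw [Finset.sum_range_succ]
      omega
    omega
  -- membership of enumerated edges in blocks
  have hmem : ∀ t < n, ∀ m, qfun B t - 1 ≤ m → m ≤ qfun B (t + 1) - 1 → e m ∈ B t := by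
    intro t ht m h1 h2
    have hmn : m < qfun B n := by
      have ha := hqmono (t + 1) n ht
      have hb := hq1 (t + 1)
      omega
    rw [hBeq t ht]
    exact Finset.mem_image_of_mem e (Finset.mem_filter.mpr
      ⟨Finset.mem_range.mpr hmn, h1, h2⟩)
  -- separation
  have hsep' : ∀ t, 0 < t → t < n → ∀ a b : ℕ, a < t → t ≤ b → b < n →
      verts (B a) ∩ verts (B b) ⊆ e (qfun B t - 1) := by
    intro t ht htn a b hat htb hbn
    rw [← hsep t ht htn]
    refine Finset.inter_subset_inter ?_ ?_
    · exact Helpers.verts_mono (Finset.subset_biUnion_of_mem B (Finset.mem_range.mpr hat))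
    · exact Helpers.verts_mono (Finset.subset_biUnion_of_mem B
        (Finset.mem_filter.mpr ⟨Finset.mem_range.mpr hbn, htb⟩))
  -- distinctness of enumerated edges
  have hedist : ∀ m₁ m₂ : ℕ, m₁ < m₂ → m₂ < qfun B n → e m₁ ≠ e m₂ := by
    intro m₁ m₂ h12 h2n hcon
    have := einj m₁ (lt_trans h12 h2n) m₂ h2n hcon
    omega
  rcases eq_or_lt_of_le (Nat.succ_le_of_lt hij) with hji | hji
  · -- consecutive case : j = i + 1
    have hfBj : e (qfun B j - 1) ∈ B j := by
      refine hmem j hjn _ le_rfl ?_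
      have := hqmono j (j + 1) (Nat.le_succ j)
      have := hq1 j
      omega
    have hji' : i + 1 = j := by omega
    have hfBi : e (qfun B j - 1) ∈ B i := by
      refine hmem i hin _ ?_ ?_
      · have := hqmono i j hij.le
        omega
      · have h5 : qfun B (i + 1) = qfun B j := by rw [hji']
        omega
    have hvv : verts (B i) ∩ verts (B j) = e (qfun B j - 1) := by
      apply Finset.Subset.antisymm
      · exact hsep' j (by omega) hjn i j hij le_rfl hjn
      · exact Finset.subset_inter (Helpers.edge_subset_verts hfBi)
          (Helpers.edge_subset_verts hfBj)
    rw [Finset.inter_assoc, hvv]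
    rcases hA with h | h
    · exact Helpers.copy_case1 k F hbal (hcopy i hin) h hfBi
    · exact Helpers.copy_case1 k F hbal (hcopy j hjn) h hfBj
  · -- non-consecutive case : i + 1 < j
    have hIA : verts A ∩ verts (B i) ∩ verts (B j) ⊆ verts A :=
      Finset.inter_subset_left.trans Finset.inter_subset_left
    have hIij : verts A ∩ verts (B i) ∩ verts (B j) ⊆ verts (B i) ∩ verts (B j) :=
      Finset.inter_subset_inter Finset.inter_subset_right (Finset.Subset.refl _)
    rcases hA with h | h
    · -- A ⊆ B i ; use the copy B (i+1) with cut edges at i+1 and i+2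
      have hu : i + 1 < n := lt_trans hji hjn
      have hw : i + 2 < n := lt_of_le_of_lt hji hjn
      have hf₂Bi : e (qfun B (i + 1) - 1) ∈ B i := by
        refine hmem i hin _ ?_ le_rfl
        have := hqmono i (i + 1) (Nat.le_succ i)
        omega
      have hq12 : qfun B (i + 1 + 1) = qfun B (i + 2) := by norm_num
      have hf₂Bu : e (qfun B (i + 1) - 1) ∈ B (i + 1) := by
        refine hmem (i + 1) hu _ le_rfl ?_
        have h5 : qfun B (i + 1) ≤ qfun B (i + 2) := hqmono (i + 1) (i + 2) (by omega)
        omega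
      have hf₁Bu : e (qfun B (i + 2) - 1) ∈ B (i + 1) := by
        refine hmem (i + 1) hu _ ?_ ?_
        · have h5 : qfun B (i + 1) ≤ qfun B (i + 2) := hqmono (i + 1) (i + 2) (by omega)
          omega
        · omega
      have hne : e (qfun B (i + 2) - 1) ≠ e (qfun B (i + 1) - 1) := by
        intro hcon
        have h1 : qfun B (i + 1) < qfun B (i + 2) := hqstrict (i + 1) hu
        have h2 := hqmono (i + 2) n hw.le
        have h3 := hq1 (i + 1)
        have h4 := hq1 (i + 2)
        have := einj (qfun B (i + 2) - 1) (by omega) (qfun B (i + 1) - 1) (by omega) hcon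
        omega
      have hI₂ : verts A ∩ verts (B i) ∩ verts (B j) ⊆ e (qfun B (i + 1) - 1) :=
        hIij.trans (hsep' (i + 1) (Nat.succ_pos i) hu i j (Nat.lt_succ_self i) hji.le hjn)
      have hI₁ : verts A ∩ verts (B i) ∩ verts (B j) ⊆ e (qfun B (i + 2) - 1) :=
        hIij.trans (hsep' (i + 2) (Nat.succ_pos _) hw i j (by omega) hji hjn)
      exact Helpers.copy_case2 k F hFk hbal (hcopy i hin) (hcopy (i + 1) hu) h
        hf₂Bi hf₁Bu hf₂Bu hne hI₂ hI₁ hIA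
    · -- A ⊆ B j ; use the copy B (j-1) with cut edges at j-1 and j
      have hu : j - 1 < n := lt_of_le_of_lt (Nat.sub_le j 1) hjn
      have hj1 : j - 1 + 1 = j := by omega
      have hf₂Bj : e (qfun B j - 1) ∈ B j := by
        refine hmem j hjn _ le_rfl ?_
        have := hqmono j (j + 1) (Nat.le_succ j)
        omega
      have hf₂Bu : e (qfun B j - 1) ∈ B (j - 1) := by
        refine hmem (j - 1) hu _ ?_ ?_
        · have := hqmono (j - 1) j (Nat.sub_le j 1)
          omega
        · rw [hj1]
      have hf₁Bu : e (qfun B (j - 1) - 1) ∈ B (j - 1) := by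
        refine hmem (j - 1) hu _ le_rfl ?_
        have h5 : qfun B (j - 1) ≤ qfun B (j - 1 + 1) := hqmono (j - 1) (j - 1 + 1) (by omega)
        omega
      have hne : e (qfun B (j - 1) - 1) ≠ e (qfun B j - 1) := by
        intro hcon
        have h1 : qfun B (j - 1) < qfun B (j - 1 + 1) := hqstrict (j - 1) hu
        rw [hj1] at h1
        have h2 := hqmono j n hjn.le
        have h3 := hq1 (j - 1)
        have h4 := hq1 j
        have := einj (qfun B (j - 1) - 1) (by omega) (qfun B j - 1) (by omega) hcon
        omega
      have hI₂ : verts A ∩ verts (B i) ∩ verts (B j) ⊆ e (qfun B j - 1) :=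
        hIij.trans (hsep' j (by omega) hjn i j hij le_rfl hjn)
      have hI₁ : verts A ∩ verts (B i) ∩ verts (B j) ⊆ e (qfun B (j - 1) - 1) :=
        hIij.trans (hsep' (j - 1) (by omega) hu i j (by omega) (Nat.sub_le j 1) hjn)
      exact Helpers.copy_case2 k F hFk hbal (hcopy j hjn) (hcopy (j - 1) hu) h
        hf₂Bj hf₁Bu hf₂Bu hne hI₂ hI₁ hIA
end

section
/- Let 1 ≤ k' ≤ k−1 and suppose e₁, …, e_ℓ (ℓ ≥ 2) is a sequence of distinct k-sets forming a k'-tight self-avoiding cyclic walk, i.e., there exist distinct k'-sets U₁, …, U_ℓ with U_i ⊆ e_i ∩ e_{i+1} for all 1 ≤ i ≤ ℓ (indices mod ℓ). Let S be the k-uniform hypergraph with edge set {e₁, …, e_ℓ} and no isolated vertices. Then there exists an edge e ∈ S with ρ_{S,e} > 1/(k − k'). -/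
open Finset

/-- if the distinct `k`-sets `e 0, …, e (ℓ-1)` form a `k'`-tight self-avoiding
cyclic walk (via distinct `k'`-sets `U i ⊆ e i ∩ e ((i+1) % ℓ)`), then the hypergraph `S` with
edge set `{e 0, …, e (ℓ-1)}` (and no isolated vertices) has an edge `f` with
`ρ_{S,f} > 1/(k - k')`. -/
theorem tight_cyclic_walk_dense
    (k k' ℓ : ℕ) (hk' : 1 ≤ k') (hk'k : k' < k) (hℓ : 2 ≤ ℓ)
    (e : ℕ → Finset ℕ)
    (hcard : ∀ i < ℓ, (e i).card = k)
    (hinj : ∀ i < ℓ, ∀ j < ℓ, e i = e j → i = j)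
    (U : ℕ → Finset ℕ)
    (hUcard : ∀ i < ℓ, (U i).card = k')
    (hUinj : ∀ i < ℓ, ∀ j < ℓ, U i = U j → i = j)
    (hUsub : ∀ i < ℓ, U i ⊆ e i ∩ e ((i + 1) % ℓ))
    (S : Finset (Finset ℕ)) (hS : S = (Finset.range ℓ).image e) :
    ∃ f ∈ S, 1 / ((k : ℚ) - (k' : ℚ)) <
      ((S.card : ℚ) - 1) / (((verts S).card : ℚ) - (k : ℚ)) := by
  -- basic facts
  have hvS : verts S = (range ℓ).sup e := by
    rw [hS, verts, Finset.sup_image]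
    rfl
  have hcardS : S.card = ℓ := by
    rw [hS, Finset.card_image_of_injOn, Finset.card_range]
    intro i hi j hj hij
    exact hinj i (mem_range.mp hi) j (mem_range.mp hj) hij
  -- partial union bound
  have key : ∀ n, 1 ≤ n → n ≤ ℓ → ((range n).sup e).card ≤ k + (n - 1) * (k - k') := by
    intro n
    induction n with
    | zero => omega
    | succ m ih =>
      intro _ hml
      rcases Nat.eq_or_lt_of_le (show 1 ≤ m + 1 from Nat.le_add_left 1 m) with h1 | h1
      · -- m = 0
        have hm : m = 0 := by omega
        subst hm
        simp [hcard 0 (by omega)]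
      · -- m ≥ 1
        have hm1 : 1 ≤ m := by omega
        have hmℓ : m < ℓ := by omega
        have hA := ih hm1 (by omega)
        set A := (range m).sup e with hAdef
        have hsup : (range (m + 1)).sup e = e m ∪ A := by
          rw [Finset.range_add_one, Finset.sup_insert]
          rfl
        have hUm : U (m - 1) ⊆ e m ∩ A := by
          have h1 := hUsub (m - 1) (by omega)
          have h2 : (m - 1 + 1) % ℓ = m := by
            rw [show m - 1 + 1 = m by omega, Nat.mod_eq_of_lt hmℓ]
          rw [h2] at h1
          intro x hx
          have := h1 hx
          rw [Finset.mem_inter] at this ⊢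
          refine ⟨this.2, ?_⟩
          exact (Finset.le_sup (f := e) (mem_range.mpr (by omega : m - 1 < m))) this.1
        have hdiff : (e m \ A).card ≤ k - k' := by
          have hsub2 : e m \ A ⊆ e m \ U (m - 1) := by
            apply Finset.sdiff_subset_sdiff le_rfl
            intro x hx; exact (Finset.mem_inter.mp (hUm hx)).2
          calc (e m \ A).card ≤ (e m \ U (m - 1)).card := Finset.card_le_card hsub2
            _ = k - k' := by
                rw [Finset.card_sdiff_of_subset (fun x hx => (Finset.mem_inter.mp (hUm hx)).1),
                  hcard m hmℓ, hUcard (m - 1) (by omega)]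
        rw [hsup]
        calc (e m ∪ A).card ≤ (e m \ A).card + A.card := by
              rw [← Finset.card_sdiff_add_card]
          _ ≤ (k - k') + (k + (m - 1) * (k - k')) := Nat.add_le_add hdiff hA
          _ ≤ k + (m + 1 - 1) * (k - k') := by
              have : m + 1 - 1 = (m - 1) + 1 := by omega
              rw [this, Nat.add_mul, one_mul]; omega
  -- bound on the full vertex set: v + 1 ≤ k + (ℓ - 1) * (k - k')
  have hA := key (ℓ - 1) (by omega) (by omega)
  set A := (range (ℓ - 1)).sup e with hAdef
  have hsup : (range ℓ).sup e = e (ℓ - 1) ∪ A := by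
    rw [show ℓ = (ℓ - 1) + 1 by omega, Finset.range_add_one, Finset.sup_insert]
    rfl
  have hU1 : U (ℓ - 2) ⊆ e (ℓ - 1) ∩ A := by
    have h1 := hUsub (ℓ - 2) (by omega)
    have h2 : (ℓ - 2 + 1) % ℓ = ℓ - 1 := by
      rw [show ℓ - 2 + 1 = ℓ - 1 by omega, Nat.mod_eq_of_lt (by omega)]
    rw [h2] at h1
    intro x hx
    have := h1 hx
    rw [Finset.mem_inter] at this ⊢
    exact ⟨this.2, (Finset.le_sup (f := e) (mem_range.mpr (by omega : ℓ - 2 < ℓ - 1))) this.1⟩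
  have hU2 : U (ℓ - 1) ⊆ e (ℓ - 1) ∩ A := by
    have h1 := hUsub (ℓ - 1) (by omega)
    have h2 : (ℓ - 1 + 1) % ℓ = 0 := by
      rw [show ℓ - 1 + 1 = ℓ by omega, Nat.mod_self]
    rw [h2] at h1
    intro x hx
    have := h1 hx
    rw [Finset.mem_inter] at this ⊢
    exact ⟨this.1, (Finset.le_sup (f := e) (mem_range.mpr (by omega : 0 < ℓ - 1))) this.2⟩
  have hUU : k' + 1 ≤ (U (ℓ - 2) ∪ U (ℓ - 1)).card := by
    by_contra h
    push_neg at h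
    have hsub : U (ℓ - 2) ⊆ U (ℓ - 2) ∪ U (ℓ - 1) := Finset.subset_union_left
    have heq : U (ℓ - 2) = U (ℓ - 2) ∪ U (ℓ - 1) := by
      apply Finset.eq_of_subset_of_card_le hsub
      rw [hUcard (ℓ - 2) (by omega)]; omega
    have : U (ℓ - 1) ⊆ U (ℓ - 2) := by
      rw [heq]; exact Finset.subset_union_right
    have heq2 : U (ℓ - 1) = U (ℓ - 2) :=
      Finset.eq_of_subset_of_card_le this
        (by rw [hUcard (ℓ - 2) (by omega), hUcard (ℓ - 1) (by omega)])
    have := hUinj (ℓ - 1) (by omega) (ℓ - 2) (by omega) heq2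
    omega
  have hUUsub : U (ℓ - 2) ∪ U (ℓ - 1) ⊆ e (ℓ - 1) :=
    Finset.union_subset (fun x hx => (Finset.mem_inter.mp (hU1 hx)).1)
      (fun x hx => (Finset.mem_inter.mp (hU2 hx)).1)
  have hdiff : (e (ℓ - 1) \ A).card ≤ k - k' - 1 := by
    have hsub2 : e (ℓ - 1) \ A ⊆ e (ℓ - 1) \ (U (ℓ - 2) ∪ U (ℓ - 1)) := by
      apply Finset.sdiff_subset_sdiff le_rfl
      exact Finset.union_subset (fun x hx => (Finset.mem_inter.mp (hU1 hx)).2)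
        (fun x hx => (Finset.mem_inter.mp (hU2 hx)).2)
    calc (e (ℓ - 1) \ A).card ≤ (e (ℓ - 1) \ (U (ℓ - 2) ∪ U (ℓ - 1))).card :=
          Finset.card_le_card hsub2
      _ = k - (U (ℓ - 2) ∪ U (ℓ - 1)).card := by
          rw [Finset.card_sdiff_of_subset hUUsub, hcard (ℓ - 1) (by omega)]
      _ ≤ k - k' - 1 := by omega
  have hvbound : ((range ℓ).sup e).card + 1 ≤ k + (ℓ - 1) * (k - k') := by
    rw [hsup]
    have h1 : (e (ℓ - 1) ∪ A).card ≤ (e (ℓ - 1) \ A).card + A.card := by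
      rw [← Finset.card_sdiff_add_card]
    have h2 : (ℓ - 1) * (k - k') = (ℓ - 2) * (k - k') + (k - k') := by
      rw [show ℓ - 1 = (ℓ - 2) + 1 by omega, Nat.add_mul, one_mul]
    have h3 : ℓ - 1 - 1 = ℓ - 2 := by omega
    rw [h3] at hA
    omega
  -- lower bound: k < v
  have hvlow : k < ((range ℓ).sup e).card := by
    have he0 : e 0 ⊆ (range ℓ).sup e := Finset.le_sup (f := e) (mem_range.mpr (by omega))
    have he1 : e 1 ⊆ (range ℓ).sup e := Finset.le_sup (f := e) (mem_range.mpr (by omega))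
    by_contra h
    push_neg at h
    have h0 : e 0 = (range ℓ).sup e := by
      apply Finset.eq_of_subset_of_card_le he0
      rw [hcard 0 (by omega)]; exact h
    have h1 : e 1 = (range ℓ).sup e := by
      apply Finset.eq_of_subset_of_card_le he1
      rw [hcard 1 (by omega)]; exact h
    have := hinj 0 (by omega) 1 (by omega) (h0.trans h1.symm)
    omega
  -- conclude
  refine ⟨e 0, by rw [hS]; exact Finset.mem_image_of_mem e (mem_range.mpr (by omega)), ?_⟩
  rw [hvS, hcardS]
  set v := ((range ℓ).sup e).card with hv
  have hkk' : (0 : ℚ) < (k : ℚ) - (k' : ℚ) := by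
    have : (k' : ℚ) < (k : ℚ) := by exact_mod_cast hk'k
    linarith
  have hvk : (0 : ℚ) < (v : ℚ) - (k : ℚ) := by
    have : (k : ℚ) < (v : ℚ) := by exact_mod_cast hvlow
    linarith
  rw [div_lt_div_iff₀ hkk' hvk]
  have hcast : (v : ℚ) + 1 ≤ (k : ℚ) + ((ℓ : ℚ) - 1) * ((k : ℚ) - (k' : ℚ)) := by
    have := hvbound
    have h1 : ((ℓ - 1 : ℕ) : ℚ) = (ℓ : ℚ) - 1 := by
      rw [Nat.cast_sub (by omega)]; norm_num
    have h2 : ((k - k' : ℕ) : ℚ) = (k : ℚ) - (k' : ℚ) := by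
      rw [Nat.cast_sub (by omega)]
    calc (v : ℚ) + 1 ≤ ((k + (ℓ - 1) * (k - k') : ℕ) : ℚ) := by exact_mod_cast this
      _ = (k : ℚ) + ((ℓ : ℚ) - 1) * ((k : ℚ) - (k' : ℚ)) := by
          push_cast [h1, h2]; ring
  nlinarith [hcast]
end
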